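/- arXiv:2411.12912 — 6 statements merged into one kernel-verified Lean document; each statement's English description precedes it below -/
import Mathlib

section
/- Let (A, A⁺, A⁻) be a Reedy algebra with complete set E = {e₀, …, eₙ} of pairwise orthogonal idempotents. Then for i ≠ j, the left A⁺-modules A⁺eᵢ and A⁺eⱼ are indecomposable and non-isomorphic; in particular A⁺ is an elementary algebra (A⁺/rad(A⁺) is a product of copies of k) with E a complete set of primitive pairwise orthogonal idempotents. -/
/-! Write `εᵢ` for `eᵢ` viewed in `A⁺`. Since the diagonal corners `εᵢ A⁺ εᵢ` are one-dimensional,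
`εᵢ x εᵢ = ψᵢ(x) εᵢ` for a scalar `ψᵢ(x)`, and since the off-diagonal corners `εⱼ A⁺ εᵢ` only raise
the degree, `εᵢ (x y) εᵢ = (εᵢ x εᵢ)(εᵢ y εᵢ)`: each `ψᵢ` is a character `A⁺ → k`. An element killed
by every `ψᵢ` strictly raises the degree and is therefore nilpotent, as is each of its left
multiples, so the common kernel of the `ψᵢ` is the Jacobson radical and `A⁺` is elementary.

Scalar corners also make every `εᵢ` primitive, hence `A⁺εᵢ` indecomposable. An isomorphism
`A⁺εᵢ ≅ A⁺εⱼ` would give nonzero `u ∈ εᵢ A⁺ εⱼ` and `v ∈ εⱼ A⁺ εᵢ` with `u v = εᵢ`, forcing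
`deg i < deg j < deg i`. -/

open scoped TensorProduct DirectSum

/-- The corner subspace `f·S·e` of an algebra `A`, for `S ⊆ A`. -/
def cornerSpace (k : Type*) [Field k] {A : Type*} [Ring A] [Algebra k A]
    (f e : A) (S : Set A) : Submodule k A :=
  Submodule.span k {x | ∃ a ∈ S, x = f * a * e}

/-- Multiplication, as a linear map on the tensor product of two subspaces of an algebra. -/
noncomputable def mulTensor (k : Type*) [Field k] {A : Type*} [Ring A] [Algebra k A]
    (M N : Submodule k A) : (M ⊗[k] N) →ₗ[k] A :=
  TensorProduct.lift ((LinearMap.mul k A).domRestrict₁₂ M N)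

/-- The multiplication map `⊕_l (e_j·P·e_l) ⊗ (e_l·M·e_i) → A`. -/
noncomputable def reedyMulMap (k : Type*) [Field k] {A : Type*} [Ring A] [Algebra k A]
    {ι : Type*} [Fintype ι] [DecidableEq ι]
    (e : ι → A) (P M : Set A) (j i : ι) :
    (⨁ l : ι, (↥(cornerSpace k (e j) (e l) P) ⊗[k] ↥(cornerSpace k (e l) (e i) M))) →ₗ[k] A :=
  DirectSum.toModule k ι A fun l =>
    mulTensor k (cornerSpace k (e j) (e l) P) (cornerSpace k (e l) (e i) M)

/-- A Reedy algebra structure on `A`: a complete set of pairwise orthogonal idempotents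
`e`, a degree function `deg`, and unital subalgebras `Ap = A⁺`, `Am = A⁻` containing the
idempotents, such that the corners of `A⁺` are upward directed and one-dimensional on the
diagonal, the corners of `A⁻` are downward directed and one-dimensional on the diagonal, and
multiplication induces isomorphisms `⊕_l e_j A⁺ e_l ⊗ e_l A⁻ e_i ≅ e_j A e_i`. -/
structure IsReedy (k : Type*) [Field k] {A : Type*} [Ring A] [Algebra k A]
    {ι : Type*} [Fintype ι] [DecidableEq ι]
    (e : ι → A) (deg : ι → ℕ) (Ap Am : Subalgebra k A) : Prop where
  idem : ∀ i, IsIdempotentElem (e i)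
  orth : ∀ i j, i ≠ j → e i * e j = 0
  complete : ∑ i, e i = 1
  memP : ∀ i, e i ∈ Ap
  memM : ∀ i, e i ∈ Am
  diagP : ∀ i, Module.finrank k (cornerSpace k (e i) (e i) (Ap : Set A)) = 1
  offP : ∀ i j, i ≠ j → cornerSpace k (e j) (e i) (Ap : Set A) ≠ ⊥ → deg i < deg j
  diagM : ∀ i, Module.finrank k (cornerSpace k (e i) (e i) (Am : Set A)) = 1
  offM : ∀ i j, i ≠ j → cornerSpace k (e j) (e i) (Am : Set A) ≠ ⊥ → deg j < deg i
  mul_inj : ∀ i j, Function.Injective (reedyMulMap k e (Ap : Set A) (Am : Set A) j i)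
  mul_range : ∀ i j, LinearMap.range (reedyMulMap k e (Ap : Set A) (Am : Set A) j i)
      = cornerSpace k (e j) (e i) Set.univ
/-- The corner `eAe` of an algebra, as a non-unital subalgebra: the set of elements
fixed under left and right multiplication by `e`. -/
def cornerNonUnitalSubalgebra (k : Type*) [Field k] {A : Type*} [Ring A] [Algebra k A]
    (e : A) : NonUnitalSubalgebra k A where
  carrier := {x | e * x = x ∧ x * e = x}
  add_mem' := fun ha hb => ⟨by rw [mul_add, ha.1, hb.1], by rw [add_mul, ha.2, hb.2]⟩
  zero_mem' := ⟨mul_zero e, zero_mul e⟩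
  mul_mem' := fun ha hb => ⟨by rw [← mul_assoc, ha.1], by rw [mul_assoc, hb.2]⟩
  smul_mem' := fun c x hx => ⟨by rw [mul_smul_comm, hx.1], by rw [smul_mul_assoc, hx.2]⟩

/-- The corner ring `eAe` attached to an idempotent `e` of an algebra `A`. -/
def CornerRing (k : Type*) [Field k] {A : Type*} [Ring A] [Algebra k A]
    (e : {x : A // IsIdempotentElem x}) : Type _ :=
  ↥(cornerNonUnitalSubalgebra k (e : A))

instance CornerRing.instRing (k : Type*) [Field k] {A : Type*} [Ring A] [Algebra k A]
    (e : {x : A // IsIdempotentElem x}) : Ring (CornerRing k e) :=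
  { (inferInstance : NonUnitalRing (cornerNonUnitalSubalgebra k (e : A))) with
    one := ⟨(e : A), e.2, e.2⟩
    one_mul := fun x => Subtype.ext x.2.1
    mul_one := fun x => Subtype.ext x.2.2 }

instance CornerRing.instModule (k : Type*) [Field k] {A : Type*} [Ring A] [Algebra k A]
    (e : {x : A // IsIdempotentElem x}) : Module k (CornerRing k e) :=
  inferInstanceAs (Module k ↥(cornerNonUnitalSubalgebra k (e : A)))

noncomputable instance CornerRing.instAlgebra (k : Type*) [Field k] {A : Type*} [Ring A]
    [Algebra k A] (e : {x : A // IsIdempotentElem x}) : Algebra k (CornerRing k e) :=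
  Algebra.ofModule
    (fun c x y => Subtype.ext (smul_mul_assoc c x.1 y.1))
    (fun c x y => Subtype.ext (mul_smul_comm c x.1 y.1))

/-- The element of the corner ring `eAe` underlying `x : A`, given proofs. -/
def CornerRing.mk (k : Type*) [Field k] {A : Type*} [Ring A] [Algebra k A]
    (e : {x : A // IsIdempotentElem x}) (x : A) (h1 : (e : A) * x = x) (h2 : x * (e : A) = x) :
    CornerRing k e := ⟨x, h1, h2⟩

/-- A left ideal is indecomposable as a left module: nonzero and with no nontrivial
direct sum decomposition. -/
def IsIndecomposableLeftIdeal (R : Type*) [Ring R] (N : Submodule R R) : Prop :=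
  N ≠ ⊥ ∧ ∀ P Q : Submodule R R, P ⊔ Q = N → Disjoint P Q → P = ⊥ ∨ Q = ⊥

/-- A finite-dimensional `k`-algebra is elementary if its quotient by the Jacobson radical
is isomorphic to a finite product of copies of `k`. -/
def IsElementary (k : Type*) [Field k] (C : Type*) [Ring C] [Algebra k C] : Prop :=
  ∃ (m : ℕ) (φ : C →ₐ[k] (Fin m → k)), Function.Surjective φ ∧
    ∀ x, φ x = 0 ↔ x ∈ Ideal.jacobson (⊥ : Ideal C)

/-- A primitive idempotent: a nonzero idempotent that is not the sum of two nonzero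
orthogonal idempotents. -/
def IsPrimitiveIdempotentElem {R : Type*} [Ring R] (e : R) : Prop :=
  IsIdempotentElem e ∧ e ≠ 0 ∧ ∀ f g : R, IsIdempotentElem f → IsIdempotentElem g →
    f * g = 0 → g * f = 0 → e = f + g → f = 0 ∨ g = 0

open Submodule

section LeftIdeal

variable {R : Type*} [Ring R] {e f : R}

theorem IsIdempotentElem.mem_span_singleton_iff (he : IsIdempotentElem e) {x : R} :
    x ∈ R ∙ e ↔ x * e = x := by
  refine ⟨fun hx => ?_, fun hx => mem_span_singleton.mpr ⟨x, hx⟩⟩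
  obtain ⟨a, rfl⟩ := mem_span_singleton.mp hx
  rw [smul_eq_mul, mul_assoc, he.eq]

theorem mul_eq_self_and_mul_eq_zero_of_disjoint {P Q : Submodule R R} (hPQ : Disjoint P Q)
    {p q x : R} (hp : p ∈ P) (hq : q ∈ Q) (hx : x ∈ P) (hxpq : x * (p + q) = x) :
    x * p = x ∧ x * q = 0 := by
  have hxq : x * q = x - x * p := by rw [eq_sub_iff_add_eq, add_comm, ← mul_add, hxpq]
  have hxqP : x * q ∈ P := hxq ▸ P.sub_mem hx (P.smul_mem x hp)
  have hxq0 : x * q = 0 := (Submodule.disjoint_def.mp hPQ) _ hxqP (Q.smul_mem x hq)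
  exact ⟨(sub_eq_zero.mp (hxq ▸ hxq0)).symm, hxq0⟩

/-- A decomposition `R e = P ⊕ Q` splits `e = p + q` into orthogonal idempotents. -/
theorem IsPrimitiveIdempotentElem.isIndecomposableLeftIdeal (he : IsPrimitiveIdempotentElem e) :
    IsIndecomposableLeftIdeal R (R ∙ e) := by
  refine ⟨fun hbot => he.2.1 ((mem_bot R).mp (hbot ▸ mem_span_singleton_self e)), ?_⟩
  intro P Q hPQ hdisj
  have hfix : ∀ x ∈ P ⊔ Q, x * e = x := fun x hx => he.1.mem_span_singleton_iff.mp (hPQ ▸ hx)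
  obtain ⟨p, hp, q, hq, rfl⟩ := mem_sup.mp (hPQ ▸ mem_span_singleton_self e)
  have hP : ∀ x ∈ P, x * p = x ∧ x * q = 0 := fun x hx =>
    mul_eq_self_and_mul_eq_zero_of_disjoint hdisj hp hq hx (hfix x (mem_sup_left hx))
  have hQ : ∀ x ∈ Q, x * q = x ∧ x * p = 0 := fun x hx =>
    mul_eq_self_and_mul_eq_zero_of_disjoint hdisj.symm hq hp hx
      (add_comm p q ▸ hfix x (mem_sup_right hx))
  rcases he.2.2 p q (hP p hp).1 (hQ q hq).1 (hP p hp).2 (hQ q hq).2 rfl with h0 | h0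
  · exact .inl <| eq_bot_iff.mpr fun x hx => (mem_bot R).mpr ((hP x hx).1 ▸ h0 ▸ mul_zero x)
  · exact .inr <| eq_bot_iff.mpr fun x hx => (mem_bot R).mpr ((hQ x hx).1 ▸ h0 ▸ mul_zero x)

theorem exists_mul_eq_of_linearEquiv (he : IsIdempotentElem e) (hf : IsIdempotentElem f)
    (φ : (R ∙ e) ≃ₗ[R] (R ∙ f)) : ∃ u v, e * u * f = u ∧ f * v * e = v ∧ u * v = e := by
  have hee : e ∈ R ∙ e := mem_span_singleton_self e
  have hff : f ∈ R ∙ f := mem_span_singleton_self f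
  set u : R := (φ ⟨e, hee⟩ : R)
  set v : R := (φ.symm ⟨f, hff⟩ : R)
  have hu : u * f = u := hf.mem_span_singleton_iff.mp (φ ⟨e, hee⟩).2
  have hv : v * e = v := he.mem_span_singleton_iff.mp (φ.symm ⟨f, hff⟩).2
  have heu : e * u = u := by
    have : e • (⟨e, hee⟩ : R ∙ e) = ⟨e, hee⟩ := Subtype.ext he.eq
    exact congrArg Subtype.val (by rw [← map_smul, this] : e • φ ⟨e, hee⟩ = φ ⟨e, hee⟩)
  have hfv : f * v = v := by
    have : f • (⟨f, hff⟩ : R ∙ f) = ⟨f, hff⟩ := Subtype.ext hf.eq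
    exact congrArg Subtype.val (by rw [← map_smul, this] :
      f • φ.symm ⟨f, hff⟩ = φ.symm ⟨f, hff⟩)
  have huv : u • (⟨f, hff⟩ : R ∙ f) = φ ⟨e, hee⟩ := Subtype.ext hu
  refine ⟨u, v, by rw [heu, hu], by rw [hfv, hv], ?_⟩
  have := congrArg (fun y => (φ.symm y : R)) huv
  simpa only [map_smul, LinearEquiv.symm_apply_apply, coe_smul, smul_eq_mul] using this

end LeftIdeal

section DegreeRaising

variable {R : Type*} [Ring R] {ι : Type*} {ε : ι → R} {deg : ι → ℕ}

def IsDegreeRaising (ε : ι → R) (deg : ι → ℕ) : Prop :=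
  ∀ i j, i ≠ j → deg j ≤ deg i → ∀ x, ε j * x * ε i = 0

theorem IsDegreeRaising.mul_ne_of_ne (hdeg : IsDegreeRaising ε deg) {i j : ι} (hij : i ≠ j)
    (hi : ε i ≠ 0) {u v : R} (hu : ε i * u * ε j = u) (hv : ε j * v * ε i = v) :
    u * v ≠ ε i := by
  intro huv
  rcases le_total (deg i) (deg j) with h | h
  · exact hi (by rw [← huv, ← hu, hdeg j i hij.symm h, zero_mul])
  · exact hi (by rw [← huv, ← hv, hdeg i j hij h, mul_zero])

variable [Fintype ι]

theorem CompleteOrthogonalIdempotents.mul_mul_mul_eq_sum (hε : CompleteOrthogonalIdempotents ε)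
    (f g x y : R) : f * (x * y) * g = ∑ l, (f * x * ε l) * (ε l * y * g) := by
  conv_lhs => rw [← mul_one x, ← hε.complete]
  simp only [Finset.mul_sum, Finset.sum_mul]
  refine Finset.sum_congr rfl fun l _ => ?_
  conv_lhs => rw [← (hε.idem l).eq]
  simp only [mul_assoc]

theorem IsDegreeRaising.corner_mul (hε : CompleteOrthogonalIdempotents ε)
    (hdeg : IsDegreeRaising ε deg) (i : ι) (x y : R) :
    ε i * (x * y) * ε i = (ε i * x * ε i) * (ε i * y * ε i) := by
  rw [hε.mul_mul_mul_eq_sum, Finset.sum_eq_single i _ (by simp)]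
  intro l _ hli
  rcases le_total (deg i) (deg l) with hil | hli'
  · rw [hdeg l i hli hil, zero_mul]
  · rw [hdeg i l (Ne.symm hli) hli', mul_zero]

theorem IsDegreeRaising.isNilpotent (hε : CompleteOrthogonalIdempotents ε)
    (hdeg : IsDegreeRaising ε deg) {a : R} (ha : ∀ i, ε i * a * ε i = 0) : IsNilpotent a := by
  have hle : ∀ i j, deg j ≤ deg i → ε j * a * ε i = 0 := fun i j hji =>
    (eq_or_ne i j).elim (fun hij => hij ▸ ha i) (fun hij => hdeg i j hij hji a)
  -- `a` strictly raises the degree, so `εⱼ aᵐ εᵢ` vanishes unless `deg j ≥ m + deg i`.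
  have hpow : ∀ m i j, deg j < m + deg i → ε j * a ^ m * ε i = 0 := by
    intro m
    induction m with
    | zero =>
      intro i j hji
      rw [pow_zero, mul_one]
      exact hε.ortho (by rintro rfl; omega)
    | succ m ih =>
      intro i j hji
      rw [pow_succ, hε.mul_mul_mul_eq_sum]
      refine Finset.sum_eq_zero fun l _ => ?_
      by_cases hjl : deg j < m + deg l
      · rw [ih l j hjl, zero_mul]
      · rw [hle i l (by omega), mul_zero]
  set n := Finset.univ.sup deg + 1
  have hn : a ^ n = (∑ j, ε j) * a ^ n * ∑ i, ε i := by rw [hε.complete, one_mul, mul_one]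
  refine ⟨n, ?_⟩
  rw [hn, Finset.sum_mul, Finset.sum_mul]
  refine Finset.sum_eq_zero fun j _ => ?_
  rw [Finset.mul_sum]
  refine Finset.sum_eq_zero fun i _ => hpow n i j ?_
  have := Finset.le_sup (f := deg) (Finset.mem_univ j)
  omega

end DegreeRaising

section ScalarCorners

variable {k : Type*} [Field k] {R : Type*} [Ring R] [Algebra k R]

variable (k) in
noncomputable def cornerCoeff {e : R} (he : e ≠ 0) (hcorner : ∀ x, e * x * e ∈ k ∙ e) :
    R →ₗ[k] k :=
  (LinearEquiv.toSpanNonzeroSingleton k R e he).symm ∘ₗ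
    (LinearMap.mulRight k e ∘ₗ LinearMap.mulLeft k e).codRestrict _ hcorner

variable {e : R} (he : e ≠ 0) (hcorner : ∀ x, e * x * e ∈ k ∙ e)
include he hcorner

theorem cornerCoeff_smul (x : R) : cornerCoeff k he hcorner x • e = e * x * e :=
  LinearEquiv.toSpanNonzeroSingleton_symm_apply_smul k R e he _

theorem cornerCoeff_eq_of_smul_eq {x : R} {c : k} (hc : c • e = e * x * e) :
    cornerCoeff k he hcorner x = c :=
  smul_left_injective k he ((cornerCoeff_smul he hcorner x).trans hc.symm)

/-- In `e = f + g`, the summand `f = e f e` is a scalar idempotent multiple of `e`. -/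
theorem IsIdempotentElem.isPrimitiveIdempotentElem_of_mul_mem_span (hidem : IsIdempotentElem e) :
    IsPrimitiveIdempotentElem e := by
  refine ⟨hidem, he, fun f g hf hg hfg hgf hefg => ?_⟩
  have hfe : f = e * f * e := by
    rw [hefg, add_mul, hf.eq, hgf, add_zero, mul_add, hf.eq, hfg, add_zero]
  set c := cornerCoeff k he hcorner f
  have hfc : f = c • e := hfe.trans (cornerCoeff_smul he hcorner f).symm
  have hc : IsIdempotentElem c := by
    refine smul_left_injective k he ?_
    have := hf.eq
    rwa [hfc, smul_mul_smul_comm, hidem.eq] at this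
  rcases IsIdempotentElem.iff_eq_zero_or_one.mp hc with hc0 | hc1
  · exact .inl (by rw [hfc, hc0, zero_smul])
  · refine .inr ?_
    rwa [hfc, hc1, one_smul, left_eq_add] at hefg

end ScalarCorners

section Jacobson

variable {R : Type*} [Ring R]

theorem mem_jacobson_bot_of_isNilpotent_mul {x : R} (hx : ∀ y, IsNilpotent (y * x)) :
    x ∈ Ideal.jacobson (⊥ : Ideal R) := by
  refine Ideal.mem_jacobson_iff.mpr fun y => ?_
  obtain ⟨u, hu⟩ := (hx y).isUnit_add_one
  refine ⟨↑u⁻¹, ?_⟩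
  rw [mul_assoc, ← mul_add_one, ← hu, Units.inv_mul, sub_self]
  exact Ideal.zero_mem _

variable {k : Type*} [Field k] [Algebra k R]

theorem AlgHom.jacobson_bot_le_ker (ψ : R →ₐ[k] k) :
    Ideal.jacobson (⊥ : Ideal R) ≤ RingHom.ker ψ :=
  sInf_le ⟨bot_le, RingHom.ker_isMaximal_of_surjective ψ fun c => ⟨algebraMap k R c, ψ.commutes c⟩⟩

theorem isElementary_of_surjective_pi {ι : Type*} [Fintype ι] (φ : R →ₐ[k] (ι → k))
    (hφ : Function.Surjective φ) (hker : ∀ x, φ x = 0 ↔ x ∈ Ideal.jacobson (⊥ : Ideal R)) :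
    IsElementary k R := by
  let σ := AlgEquiv.piCongrLeft' k (fun _ : ι => k) (Fintype.equivFin ι)
  refine ⟨Fintype.card ι, σ.toAlgHom.comp φ, σ.surjective.comp hφ, fun x => ?_⟩
  rw [← hker x]
  exact map_eq_zero_iff σ σ.injective

end Jacobson

namespace IsDegreeRaising

variable {k : Type*} [Field k] {R : Type*} [Ring R] [Algebra k R] {ι : Type*} [Fintype ι]
  {ε : ι → R} {deg : ι → ℕ} (hε : CompleteOrthogonalIdempotents ε) (hdeg : IsDegreeRaising ε deg)
  (hne : ∀ i, ε i ≠ 0) (hcorner : ∀ i x, ε i * x * ε i ∈ k ∙ ε i)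
include hε hdeg hne hcorner

variable (k) in
noncomputable def cornerChar (i : ι) : R →ₐ[k] k :=
  AlgHom.ofLinearMap (cornerCoeff k (hne i) (hcorner i))
    (cornerCoeff_eq_of_smul_eq _ _ (by rw [one_smul, mul_one, (hε.idem i).eq]))
    fun x y => cornerCoeff_eq_of_smul_eq _ _ <| by
      rw [hdeg.corner_mul hε, ← cornerCoeff_smul (hne i) (hcorner i) x,
        ← cornerCoeff_smul (hne i) (hcorner i) y, smul_mul_smul_comm, (hε.idem i).eq]

theorem cornerChar_eq_zero_iff (i : ι) (x : R) :
    cornerChar k hε hdeg hne hcorner i x = 0 ↔ ε i * x * ε i = 0 := by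
  rw [← cornerCoeff_smul (hne i) (hcorner i) x, smul_eq_zero, or_iff_left (hne i)]
  rfl

theorem cornerChar_sum_smul (i : ι) (w : ι → k) :
    cornerChar k hε hdeg hne hcorner i (∑ j, w j • ε j) = w i := by
  refine cornerCoeff_eq_of_smul_eq (hne i) (hcorner i) ?_
  have hoff : ∀ j ≠ i, ε i * (w j • ε j) = 0 := fun j hji => by
    rw [mul_smul_comm, hε.ortho hji.symm, smul_zero]
  rw [Finset.mul_sum, Finset.sum_eq_single i (fun j _ => hoff j) (by simp), mul_smul_comm,
    smul_mul_assoc, (hε.idem i).eq, (hε.idem i).eq]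

theorem isElementary : IsElementary k R := by
  refine isElementary_of_surjective_pi (AlgHom.pi (cornerChar k hε hdeg hne hcorner))
    (fun w => ⟨∑ j, w j • ε j, funext fun i => cornerChar_sum_smul hε hdeg hne hcorner i w⟩)
    fun x => ⟨fun hx => mem_jacobson_bot_of_isNilpotent_mul fun y => ?_, fun hx => ?_⟩
  · refine hdeg.isNilpotent hε fun i => ?_
    rw [← cornerChar_eq_zero_iff hε hdeg hne hcorner, map_mul]
    exact mul_eq_zero_of_right _ (congrFun hx i)
  · exact funext fun i => RingHom.mem_ker.mp <|
      (cornerChar k hε hdeg hne hcorner i).jacobson_bot_le_ker hx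

end IsDegreeRaising

namespace IsReedy

variable {k : Type*} [Field k] {A : Type*} [Ring A] [Algebra k A] {ι : Type*} [Fintype ι]
  [DecidableEq ι] {e : ι → A} {deg : ι → ℕ} {Ap Am : Subalgebra k A}
  (h : IsReedy k e deg Ap Am)
include h

theorem ne_zero (i : ι) : e i ≠ 0 := by
  intro h0
  have hbot : cornerSpace k (e i) (e i) (Ap : Set A) = ⊥ :=
    span_eq_bot.mpr (by rintro _ ⟨a, -, rfl⟩; rw [h0, zero_mul, mul_zero])
  have h1 := h.diagP i
  rw [hbot, finrank_bot] at h1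
  exact zero_ne_one h1

theorem cornerSpace_plus_self (i : ι) : cornerSpace k (e i) (e i) (Ap : Set A) = k ∙ e i := by
  have := Module.finite_of_finrank_eq_succ (h.diagP i)
  refine (eq_of_le_of_finrank_eq ?_ ?_).symm
  · exact span_le.mpr <| Set.singleton_subset_iff.mpr <|
      subset_span ⟨e i, h.memP i, by rw [(h.idem i).eq, (h.idem i).eq]⟩
  · rw [h.diagP i, finrank_span_singleton (h.ne_zero i)]

theorem completeOrthogonalIdempotents_plus :
    CompleteOrthogonalIdempotents fun i => (⟨e i, h.memP i⟩ : Ap) where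
  idem i := Subtype.ext (h.idem i)
  ortho i j hij := Subtype.ext (h.orth i j hij)
  complete := Subtype.ext (by simpa using h.complete)

theorem isDegreeRaising_plus : IsDegreeRaising (fun i => (⟨e i, h.memP i⟩ : Ap)) deg := by
  refine fun i j hij hle x => Subtype.ext <| by_contra fun hx => ?_
  refine (h.offP i j hij fun hbot => hx ?_).not_ge hle
  exact (mem_bot k).mp (hbot ▸ subset_span ⟨x, x.2, rfl⟩)

theorem mul_mem_span_plus (i : ι) (x : Ap) :
    (⟨e i, h.memP i⟩ : Ap) * x * ⟨e i, h.memP i⟩ ∈ k ∙ (⟨e i, h.memP i⟩ : Ap) := by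
  have : e i * x * e i ∈ k ∙ e i := h.cornerSpace_plus_self i ▸ subset_span ⟨x, x.2, rfl⟩
  obtain ⟨c, hc⟩ := mem_span_singleton.mp this
  exact mem_span_singleton.mpr ⟨c, Subtype.ext hc⟩

end IsReedy

theorem reedy_plus_elementary_general
    (k : Type*) [Field k] (A : Type*) [Ring A] [Algebra k A]
    {ι : Type*} [Fintype ι] [DecidableEq ι]
    (e : ι → A) (deg : ι → ℕ) (Ap Am : Subalgebra k A)
    (h : IsReedy k e deg Ap Am) (hmem : ∀ i, e i ∈ Ap) :
    (∀ i, IsIndecomposableLeftIdeal ↥Ap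
        (Submodule.span ↥Ap ({⟨e i, hmem i⟩} : Set ↥Ap))) ∧
    (∀ i j, i ≠ j → IsEmpty
        ((Submodule.span ↥Ap ({⟨e i, hmem i⟩} : Set ↥Ap)) ≃ₗ[↥Ap]
          (Submodule.span ↥Ap ({⟨e j, hmem j⟩} : Set ↥Ap)))) ∧
    IsElementary k ↥Ap ∧
    (∀ i, IsPrimitiveIdempotentElem (⟨e i, hmem i⟩ : ↥Ap)) ∧
    (∑ i, (⟨e i, hmem i⟩ : ↥Ap)) = 1 ∧
    (∀ i j, i ≠ j → (⟨e i, hmem i⟩ : ↥Ap) * ⟨e j, hmem j⟩ = 0) := by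
  have hε := h.completeOrthogonalIdempotents_plus
  have hdeg := h.isDegreeRaising_plus
  have hne : ∀ i, (⟨e i, hmem i⟩ : Ap) ≠ 0 := fun i h0 => h.ne_zero i (congrArg Subtype.val h0)
  have hprim : ∀ i, IsPrimitiveIdempotentElem (⟨e i, hmem i⟩ : Ap) := fun i =>
    (hε.idem i).isPrimitiveIdempotentElem_of_mul_mem_span (hne i) (h.mul_mem_span_plus i)
  refine ⟨fun i => (hprim i).isIndecomposableLeftIdeal, fun i j hij => ⟨fun φ => ?_⟩,
    hdeg.isElementary hε hne h.mul_mem_span_plus, hprim, hε.complete, fun i j hij => hε.ortho hij⟩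
  obtain ⟨u, v, hu, hv, huv⟩ := exists_mul_eq_of_linearEquiv (hε.idem i) (hε.idem j) φ
  exact hdeg.mul_ne_of_ne hij (hne i) hu hv huv

/-- For a Reedy algebra `(A, A⁺, A⁻)`, the left `A⁺`-modules `A⁺eᵢ` are
indecomposable and pairwise non-isomorphic; in particular `A⁺` is elementary with the `eᵢ`
a complete set of primitive pairwise orthogonal idempotents. -/
theorem reedy_plus_elementary
    (k : Type*) [Field k] (A : Type*) [Ring A] [Algebra k A] [FiniteDimensional k A]
    {ι : Type*} [Fintype ι] [DecidableEq ι]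
    (e : ι → A) (deg : ι → ℕ) (Ap Am : Subalgebra k A)
    (h : IsReedy k e deg Ap Am) (hmem : ∀ i, e i ∈ Ap) :
    (∀ i, IsIndecomposableLeftIdeal ↥Ap
        (Submodule.span ↥Ap ({⟨e i, hmem i⟩} : Set ↥Ap))) ∧
    (∀ i j, i ≠ j → IsEmpty
        ((Submodule.span ↥Ap ({⟨e i, hmem i⟩} : Set ↥Ap)) ≃ₗ[↥Ap]
          (Submodule.span ↥Ap ({⟨e j, hmem j⟩} : Set ↥Ap)))) ∧
    IsElementary k ↥Ap ∧
    (∀ i, IsPrimitiveIdempotentElem (⟨e i, hmem i⟩ : ↥Ap)) ∧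
    (∑ i, (⟨e i, hmem i⟩ : ↥Ap)) = 1 ∧
    (∀ i j, i ≠ j → (⟨e i, hmem i⟩ : ↥Ap) * ⟨e j, hmem j⟩ = 0) :=
  reedy_plus_elementary_general k A e deg Ap Am h hmem
end

section
/- Let (A, A⁺, A⁻) be a Reedy algebra with idempotent set E. Then the subalgebra S := k e₀ × k e₁ × ⋯ × k eₙ (the k-span of the idempotents in E) is a maximal semisimple subalgebra of A⁺. -/
open scoped TensorProduct DirectSum

/-!
The idempotents span a copy of `k × ⋯ × k` inside `A⁺`, hence a semisimple subalgebra `S`.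
If `S ⊆ T ⊆ A⁺`, each `t ∈ T` differs from an element of `S` by an element with vanishing
diagonal corners `eᵢ t eᵢ`, since these corners of `A⁺` are one-dimensional. Such an element
only raises degrees, so it is nilpotent, and so is every left multiple of it in `T`. In a
semisimple ring the left ideal it generates is spanned by an idempotent, which is then
nilpotent, hence zero; so `T = S`.
-/

theorem IsSemisimpleRing.eq_zero_of_forall_isNilpotent_mul {R : Type*} [Ring R]
    [IsSemisimpleRing R] {x : R} (hx : ∀ y, IsNilpotent (y * x)) : x = 0 := by
  obtain ⟨ε, hε, hspan⟩ := IsSemisimpleRing.ideal_eq_span_idempotent (Ideal.span {x})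
  obtain ⟨y, hy⟩ := Ideal.mem_span_singleton'.mp (hspan ▸ Ideal.mem_span_singleton_self ε)
  have hε0 : ε = 0 := hε.eq_zero_of_isNilpotent (hy ▸ hx y)
  rw [hε0, Ideal.span_singleton_eq_bot.mpr rfl, Ideal.span_singleton_eq_bot] at hspan
  exact hspan

namespace CompleteOrthogonalIdempotents

section Semiring

variable {R : Type*} [Semiring R] {ι : Type*} [Fintype ι] {e : ι → R}

theorem mul_mul_mul_eq_sum_s2 (he : CompleteOrthogonalIdempotents e) (a b : R) (i j : ι) :
    e j * (a * b) * e i = ∑ l, e j * a * e l * (e l * b * e i) := by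
  calc e j * (a * b) * e i = e j * a * (∑ l, e l) * b * e i := by
        simp only [he.complete, mul_one, mul_assoc]
    _ = ∑ l, e j * a * (e l * e l) * b * e i := by
        simp only [Finset.mul_sum, Finset.sum_mul, (he.idem _).eq]
    _ = ∑ l, e j * a * e l * (e l * b * e i) := by simp only [mul_assoc]

theorem eq_sum_sum_mul_mul (he : CompleteOrthogonalIdempotents e) (x : R) :
    x = ∑ i, ∑ j, e j * x * e i := by
  calc x = (∑ j, e j) * x * (∑ i, e i) := by rw [he.complete, one_mul, mul_one]
    _ = ∑ i, ∑ j, e j * x * e i := by simp only [Finset.sum_mul, Finset.mul_sum]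

theorem mul_pow_mul_eq_zero (he : CompleteOrthogonalIdempotents e) {deg : ι → ℕ} {x : R}
    (hx : ∀ i j, e j * x * e i ≠ 0 → deg i < deg j) (m : ℕ) :
    ∀ {i j : ι}, deg j < deg i + m → e j * x ^ m * e i = 0 := by
  induction m with
  | zero =>
    intro i j hji
    rw [pow_zero, mul_one]
    exact he.ortho (by rintro rfl; omega)
  | succ m ih =>
    intro i j hji
    rw [pow_succ', he.mul_mul_mul_eq_sum_s2]
    refine Finset.sum_eq_zero fun l _ => ?_
    by_cases hl : e j * x * e l = 0
    · rw [hl, zero_mul]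
    · rw [ih (by have := hx l j hl; omega), mul_zero]

theorem isNilpotent_of_lt_of_mul_mul_ne_zero (he : CompleteOrthogonalIdempotents e)
    (deg : ι → ℕ) {x : R} (hx : ∀ i j, e j * x * e i ≠ 0 → deg i < deg j) : IsNilpotent x := by
  refine ⟨Finset.univ.sup deg + 1, ?_⟩
  rw [he.eq_sum_sum_mul_mul (x ^ _)]
  refine Finset.sum_eq_zero fun i _ => Finset.sum_eq_zero fun j _ => ?_
  have := Finset.le_sup (f := deg) (Finset.mem_univ j)
  exact he.mul_pow_mul_eq_zero hx _ (by omega)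

variable [DecidableEq ι] (k : Type*) [CommSemiring k] [Algebra k R]

theorem mul_sum_smul_mul (he : CompleteOrthogonalIdempotents e) (c : ι → k) (i : ι) :
    e i * (∑ j, c j • e j) * e i = c i • e i := by
  simp [Finset.mul_sum, he.mul_eq]

noncomputable def sumSMulAlgHom (he : CompleteOrthogonalIdempotents e) : (ι → k) →ₐ[k] R :=
  AlgHom.ofLinearMap (Fintype.linearCombination k e)
    (by simp [Fintype.linearCombination_apply, he.complete])
    (fun c d => by
      simp [Fintype.linearCombination_apply, Finset.sum_mul_sum, he.mul_eq, smul_smul, mul_comm])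

theorem sumSMulAlgHom_apply (he : CompleteOrthogonalIdempotents e) (c : ι → k) :
    he.sumSMulAlgHom k c = ∑ i, c i • e i :=
  rfl

theorem range_sumSMulAlgHom (he : CompleteOrthogonalIdempotents e) :
    (he.sumSMulAlgHom k).range = Algebra.adjoin k (Set.range e) := by
  apply le_antisymm
  · rintro _ ⟨c, rfl⟩
    exact Subalgebra.sum_mem _ fun i _ =>
      Subalgebra.smul_mem _ (Algebra.subset_adjoin (Set.mem_range_self i)) _
  · refine Algebra.adjoin_le (Set.range_subset_iff.mpr fun i => ⟨Pi.single i 1, ?_⟩)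
    simp [sumSMulAlgHom, Fintype.linearCombination_apply_single]

end Semiring

variable {R : Type*} [Ring R] {ι : Type*} [Fintype ι] [DecidableEq ι] {e : ι → R}
  (k : Type*) [Field k] [Algebra k R]

theorem sumSMulAlgHom_injective (he : CompleteOrthogonalIdempotents e) (hne : ∀ i, e i ≠ 0) :
    Function.Injective (he.sumSMulAlgHom k) := by
  intro c d hcd
  funext i
  have hi := congrArg (fun x => e i * x * e i) hcd
  simp only [sumSMulAlgHom_apply, mul_sum_smul_mul k he] at hi
  exact smul_left_injective k (hne i) hi

theorem isSemisimpleRing_adjoin (he : CompleteOrthogonalIdempotents e) (hne : ∀ i, e i ≠ 0) :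
    IsSemisimpleRing (Algebra.adjoin k (Set.range e)) :=
  ((AlgEquiv.ofInjective _ (he.sumSMulAlgHom_injective k hne)).trans
    (Subalgebra.equivOfEq _ _ (he.range_sumSMulAlgHom k))).toRingEquiv.isSemisimpleRing

end CompleteOrthogonalIdempotents

theorem mul_mul_mem_cornerSpace {k : Type*} [Field k] {A : Type*} [Ring A] [Algebra k A]
    {S : Set A} {a : A} (ha : a ∈ S) (f e : A) : f * a * e ∈ cornerSpace k f e S :=
  Submodule.subset_span ⟨a, ha, rfl⟩

namespace IsReedy

variable {k : Type*} [Field k] {A : Type*} [Ring A] [Algebra k A]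
  {ι : Type*} [Fintype ι] [DecidableEq ι] {e : ι → A} {deg : ι → ℕ} {Ap Am : Subalgebra k A}

theorem completeOrthogonalIdempotents (h : IsReedy k e deg Ap Am) :
    CompleteOrthogonalIdempotents e :=
  ⟨⟨h.idem, fun _ _ => h.orth _ _⟩, h.complete⟩

theorem mul_mul_eq_zero_of_not_lt (h : IsReedy k e deg Ap Am) {a : A} (ha : a ∈ Ap) {i j : ι}
    (hij : i ≠ j) (hd : ¬ deg i < deg j) : e j * a * e i = 0 := by
  by_contra hne
  refine hd (h.offP i j hij fun hbot => hne ?_)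
  simpa [hbot] using mul_mul_mem_cornerSpace (k := k) ha (e j) (e i)

theorem ne_zero_s2 (h : IsReedy k e deg Ap Am) (i : ι) : e i ≠ 0 := by
  intro h0
  have hbot : cornerSpace k (e i) (e i) (Ap : Set A) = ⊥ := by
    rw [eq_bot_iff, cornerSpace, Submodule.span_le]
    rintro _ ⟨a, _, rfl⟩
    simp [h0]
  have hrank := h.diagP i
  rw [hbot, finrank_bot] at hrank
  exact zero_ne_one hrank

theorem exists_mul_mul_eq_smul (h : IsReedy k e deg Ap Am) {a : A} (ha : a ∈ Ap) (i : ι) :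
    ∃ c : k, e i * a * e i = c • e i := by
  have hei : e i ∈ cornerSpace k (e i) (e i) (Ap : Set A) := by
    simpa [(h.idem i).eq] using mul_mul_mem_cornerSpace (k := k) (h.memP i) (e i) (e i)
  obtain ⟨c, hc⟩ :=
    (finrank_eq_one_iff_of_nonzero' ⟨e i, hei⟩ (Subtype.coe_ne_coe.mp (h.ne_zero_s2 i))).mp
      (h.diagP i) ⟨_, mul_mul_mem_cornerSpace ha (e i) (e i)⟩
  exact ⟨c, congrArg Subtype.val hc.symm⟩

theorem isNilpotent_of_mul_mul_self_eq_zero (h : IsReedy k e deg Ap Am) {a : A} (ha : a ∈ Ap)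
    (hd : ∀ i, e i * a * e i = 0) : IsNilpotent a := by
  refine h.completeOrthogonalIdempotents.isNilpotent_of_lt_of_mul_mul_ne_zero deg fun i j hne => ?_
  by_contra hlt
  rcases eq_or_ne i j with rfl | hij
  · exact hne (hd i)
  · exact hne (h.mul_mul_eq_zero_of_not_lt ha hij hlt)

theorem mul_mul_self_mul_eq_zero (h : IsReedy k e deg Ap Am) {a b : A} (ha : a ∈ Ap)
    (hb : b ∈ Ap) (hd : ∀ i, e i * a * e i = 0) (i : ι) : e i * (b * a) * e i = 0 := by
  rw [h.completeOrthogonalIdempotents.mul_mul_mul_eq_sum_s2]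
  refine Finset.sum_eq_zero fun l _ => ?_
  rcases eq_or_ne l i with rfl | hli
  · rw [hd l, mul_zero]
  · by_cases hdeg : deg l < deg i
    · rw [h.mul_mul_eq_zero_of_not_lt ha hli.symm (by omega), mul_zero]
    · rw [h.mul_mul_eq_zero_of_not_lt hb hli hdeg, zero_mul]

theorem eq_zero_of_mul_mul_self_eq_zero (h : IsReedy k e deg Ap Am) {T : Subalgebra k A}
    [IsSemisimpleRing T] (hT : T ≤ Ap) {x : A} (hx : x ∈ T) (hd : ∀ i, e i * x * e i = 0) :
    x = 0 := by
  suffices (⟨x, hx⟩ : T) = 0 from congrArg Subtype.val this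
  refine IsSemisimpleRing.eq_zero_of_forall_isNilpotent_mul fun y => ?_
  rw [← IsNilpotent.map_iff (f := T.val) Subtype.val_injective]
  exact h.isNilpotent_of_mul_mul_self_eq_zero (hT (mul_mem y.2 hx))
    (h.mul_mul_self_mul_eq_zero (hT hx) (hT y.2) hd)

theorem eq_adjoin_of_isSemisimpleRing (h : IsReedy k e deg Ap Am) {T : Subalgebra k A}
    [IsSemisimpleRing T] (hT : T ≤ Ap) (hST : Algebra.adjoin k (Set.range e) ≤ T) :
    T = Algebra.adjoin k (Set.range e) := by
  have he := h.completeOrthogonalIdempotents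
  refine le_antisymm (fun t ht => ?_) hST
  choose c hc using fun i => h.exists_mul_mul_eq_smul (hT ht) i
  have hs : he.sumSMulAlgHom k c ∈ Algebra.adjoin k (Set.range e) :=
    he.range_sumSMulAlgHom k ▸ AlgHom.mem_range_self _ c
  have hdiff : t - he.sumSMulAlgHom k c = 0 :=
    h.eq_zero_of_mul_mul_self_eq_zero hT (sub_mem ht (hST hs)) fun i => by
      rw [mul_sub, sub_mul, he.sumSMulAlgHom_apply k, he.mul_sum_smul_mul k, hc, sub_self]
  rwa [sub_eq_zero.mp hdiff]

end IsReedy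

theorem reedy_span_idempotents_maximal_semisimple_general
    (k : Type*) [Field k] (A : Type*) [Ring A] [Algebra k A]
    {ι : Type*} [Fintype ι] [DecidableEq ι]
    (e : ι → A) (deg : ι → ℕ) (Ap Am : Subalgebra k A)
    (h : IsReedy k e deg Ap Am) :
    Algebra.adjoin k (Set.range e) ≤ Ap ∧
    IsSemisimpleRing ↥(Algebra.adjoin k (Set.range e)) ∧
    ∀ T : Subalgebra k A, T ≤ Ap → Algebra.adjoin k (Set.range e) ≤ T →
      IsSemisimpleRing ↥T → T = Algebra.adjoin k (Set.range e) :=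
  ⟨Algebra.adjoin_le (Set.range_subset_iff.mpr h.memP),
    h.completeOrthogonalIdempotents.isSemisimpleRing_adjoin k h.ne_zero_s2,
    fun _ hT hST _ => h.eq_adjoin_of_isSemisimpleRing hT hST⟩

/-- For a Reedy algebra `(A, A⁺, A⁻)` with idempotent set `E`, the
subalgebra `S = k e₀ × ⋯ × k eₙ` generated by the idempotents is a maximal semisimple
subalgebra of `A⁺`: it is semisimple, contained in `A⁺`, and equal to every semisimple
subalgebra of `A⁺` containing it. -/
theorem reedy_span_idempotents_maximal_semisimple
    (k : Type*) [Field k] (A : Type*) [Ring A] [Algebra k A] [FiniteDimensional k A]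
    {ι : Type*} [Fintype ι] [DecidableEq ι]
    (e : ι → A) (deg : ι → ℕ) (Ap Am : Subalgebra k A)
    (h : IsReedy k e deg Ap Am) :
    Algebra.adjoin k (Set.range e) ≤ Ap ∧
    IsSemisimpleRing ↥(Algebra.adjoin k (Set.range e)) ∧
    ∀ T : Subalgebra k A, T ≤ Ap → Algebra.adjoin k (Set.range e) ≤ T →
      IsSemisimpleRing ↥T → T = Algebra.adjoin k (Set.range e) :=
  reedy_span_idempotents_maximal_semisimple_general k A e deg Ap Am h
end

section
/- Let A be a finite-dimensional k-algebra whose indecomposable projective modules P(0),…,P(n) satisfy End_A(P(i)) ≅ k for all i, and suppose there is a partial order ⊴ such that Hom_A(P(j), P(i)) ≠ 0 only if i ⊴ j. Let b be a minimal element of the partial order. Then the trace ideal J' of P(b) in A is a heredity ideal: J' is projective as a left A-module, J'·rad(A)·J' = 0, and (J')² = J'. -/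
open scoped TensorProduct DirectSum

/-! Since `b` is minimal, `Hom(P b, P i) = 0` for `i ≠ b`, so every map `P b → A ≅ ⨁ P i ^ μ i`
lands in the summand `P b ^ μ b`; hence the trace of `P b` is that summand, which is projective.
For `ρ ∈ rad A` and `f : P b → A`, the map `x ↦ f x * ρ` lands there as well, and each of its
coordinates is an endomorphism of `P b` with image in `rad A • P b`. Being a scalar, such an
endomorphism vanishes by Nakayama's lemma, so `J' · rad A = 0`. Idempotency holds for the trace of
any projective module, by the dual basis lemma. -/

def traceIdeal (A M : Type*) [Ring A] [AddCommGroup M] [Module A M] : Ideal A :=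
  ⨆ f : M →ₗ[A] A, LinearMap.range f

section traceIdeal

variable {A M : Type*} [Ring A] [AddCommGroup M] [Module A M]

theorem range_le_traceIdeal (f : M →ₗ[A] A) : LinearMap.range f ≤ traceIdeal A M :=
  le_iSup (fun f : M →ₗ[A] A => LinearMap.range f) f

theorem apply_mem_traceIdeal (f : M →ₗ[A] A) (x : M) : f x ∈ traceIdeal A M :=
  range_le_traceIdeal f ⟨x, rfl⟩

theorem traceIdeal_le_iff {I : Ideal A} :
    traceIdeal A M ≤ I ↔ ∀ (f : M →ₗ[A] A) (x : M), f x ∈ I := by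
  simp only [traceIdeal, iSup_le_iff, LinearMap.range_le_iff_comap, Submodule.eq_top_iff',
    Submodule.mem_comap]

instance : (traceIdeal A M).IsTwoSided :=
  ⟨fun a hx =>
    traceIdeal_le_iff (I := Submodule.comap (LinearMap.toSpanSingleton A A a) (traceIdeal A M)) |>.2
      (fun f x => apply_mem_traceIdeal (LinearMap.toSpanSingleton A A a ∘ₗ f) x) hx⟩

open scoped Pointwise in
theorem span_traceIdeal_mul_traceIdeal [Module.Projective A M] :
    Submodule.span A ((traceIdeal A M : Set A) * (traceIdeal A M : Set A)) = traceIdeal A M := by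
  refine le_antisymm (Submodule.span_le.2 ?_) (traceIdeal_le_iff.2 fun f x => ?_)
  · rintro _ ⟨u, -, v, hv, rfl⟩
    exact (traceIdeal A M).mul_mem_left u hv
  obtain ⟨s, hs⟩ := Module.projective_def'.1 ‹Module.Projective A M›
  have hfx : f x = (s x).sum fun y a => a * f y := by
    conv_lhs => rw [← LinearMap.id_apply (R := A) x, ← hs]
    simp [Finsupp.linearCombination_apply, map_finsuppSum]
  rw [hfx]
  exact Submodule.sum_mem _ fun y _ => Submodule.subset_span <|
    Set.mul_mem_mul (apply_mem_traceIdeal (Finsupp.lapply y ∘ₗ s) x) (apply_mem_traceIdeal f y)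

theorem traceIdeal_pi_le {ι : Type*} [Fintype ι] [DecidableEq ι] :
    traceIdeal A (ι → M) ≤ traceIdeal A M := by
  refine traceIdeal_le_iff.2 fun f v => ?_
  rw [← Finset.univ_sum_single v, map_sum]
  exact Submodule.sum_mem _ fun t _ => apply_mem_traceIdeal (f ∘ₗ LinearMap.single A _ t) (v t)

end traceIdeal

theorem LinearMap.eq_zero_of_forall_proj_comp_eq_zero {R M N ι : Type*} [Semiring R]
    [AddCommMonoid M] [AddCommMonoid N] [Module R M] [Module R N] {g : M →ₗ[R] (ι → N)}
    (h : ∀ t, LinearMap.proj t ∘ₗ g = 0) : g = 0 :=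
  LinearMap.ext fun x => funext fun t => LinearMap.congr_fun (h t) x

section Nakayama

variable {A M : Type*} [Ring A] [AddCommGroup M] [Module A M]

theorem smul_id_eq_zero_of_range_le_jacobson_smul {k : Type*} [DivisionRing k] [Module k M]
    [SMulCommClass A k M] [Module.Finite A M] (c : k)
    (h : LinearMap.range (c • LinearMap.id : M →ₗ[A] M) ≤ Ring.jacobson A • ⊤) :
    c • (LinearMap.id : M →ₗ[A] M) = 0 := by
  rcases eq_or_ne c 0 with rfl | hc
  · exact zero_smul k _
  have hsurj : Function.Surjective (c • LinearMap.id : M →ₗ[A] M) := fun y =>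
    ⟨c⁻¹ • y, by simp [smul_smul, mul_inv_cancel₀ hc]⟩
  rw [LinearMap.range_eq_top.2 hsurj] at h
  have htop : (⊤ : Submodule A M) = ⊥ := Module.Finite.fg_top.eq_bot_of_le_jacobson_smul h
  ext x
  have hx : x ∈ (⊥ : Submodule A M) := htop ▸ Submodule.mem_top
  simp [(Submodule.mem_bot A).1 hx]

theorem pi_eq_zero_of_range_le_jacobson_smul {k ι : Type*} [DivisionRing k] [Module k M]
    [SMulCommClass A k M] [Module.Finite A (ι → M)]
    (hEnd : ∀ ψ : M →ₗ[A] M, ∃ c : k, ψ = c • LinearMap.id) (g : M →ₗ[A] (ι → M))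
    (hg : LinearMap.range g ≤ Ring.jacobson A • ⊤) : g = 0 := by
  refine LinearMap.eq_zero_of_forall_proj_comp_eq_zero fun t => ?_
  have : Module.Finite A M := .of_surjective _ (LinearMap.proj_surjective (φ := fun _ : ι => M) t)
  obtain ⟨c, hc⟩ := hEnd (LinearMap.proj t ∘ₗ g)
  rw [hc]
  refine smul_id_eq_zero_of_range_le_jacobson_smul c ?_
  rw [← hc, LinearMap.range_comp, Submodule.map_le_iff_le_comap]
  exact hg.trans (Submodule.smul_top_le_comap_smul_top _ _)

end Nakayama

section Decomposition

variable {A M ι : Type*} [Ring A] [AddCommGroup M] [Module A M]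
  {Q : ι → Type*} [∀ i, AddCommGroup (Q i)] [∀ i, Module A (Q i)]

theorem Module.Finite.of_self_linearEquiv_directSum [DecidableEq ι] (Φ : A ≃ₗ[A] ⨁ i, Q i)
    (b : ι) : Module.Finite A (Q b) :=
  .of_surjective (DirectSum.component A ι Q b ∘ₗ Φ.toLinearMap) fun y =>
    ⟨Φ.symm (DirectSum.lof A ι Q b y), by simp⟩

theorem Module.Projective.of_self_linearEquiv_directSum [DecidableEq ι]
    (Φ : A ≃ₗ[A] ⨁ i, Q i) (b : ι) : Module.Projective A (Q b) :=
  .of_split (Φ.symm.toLinearMap ∘ₗ DirectSum.lof A ι Q b)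
    (DirectSum.component A ι Q b ∘ₗ Φ.toLinearMap) (by ext; simp)

theorem injective_symm_comp_lof [DecidableEq ι] (Φ : A ≃ₗ[A] ⨁ i, Q i) (b : ι) :
    Function.Injective (Φ.symm.toLinearMap ∘ₗ DirectSum.lof A ι Q b) := fun x y h => by
  simpa using congrArg (DirectSum.component A ι Q b ∘ Φ) h

theorem range_le_range_symm_comp_lof [DecidableEq ι] (Φ : A ≃ₗ[A] ⨁ i, Q i) {b : ι}
    {f : M →ₗ[A] A}
    (hf : ∀ i ≠ b, DirectSum.component A ι Q i ∘ₗ Φ.toLinearMap ∘ₗ f = 0) :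
    LinearMap.range f ≤ LinearMap.range (Φ.symm.toLinearMap ∘ₗ DirectSum.lof A ι Q b) := by
  rintro _ ⟨x, rfl⟩
  refine ⟨DirectSum.component A ι Q b (Φ (f x)), Φ.symm_apply_eq.2 ?_⟩
  refine DirectSum.ext_component A fun i => ?_
  rcases eq_or_ne i b with rfl | hi
  · simp
  · simpa [DirectSum.component.of, hi.symm] using (LinearMap.congr_fun (hf i hi) x).symm

theorem eq_zero_of_forall_component_comp_eq_zero (Φ : A ≃ₗ[A] ⨁ i, Q i) {f : M →ₗ[A] A}
    (hf : ∀ i, DirectSum.component A ι Q i ∘ₗ Φ.toLinearMap ∘ₗ f = 0) : f = 0 := by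
  ext x
  refine Φ.injective (DirectSum.ext_component A fun i => ?_)
  simpa using LinearMap.congr_fun (hf i) x

theorem traceIdeal_eq_range_symm_comp_lof [DecidableEq ι] (Φ : A ≃ₗ[A] ⨁ i, Q i) {b : ι}
    (hvan : ∀ i ≠ b, ∀ g : M →ₗ[A] Q i, g = 0)
    (hQ : traceIdeal A (Q b) ≤ traceIdeal A M) :
    traceIdeal A M = LinearMap.range (Φ.symm.toLinearMap ∘ₗ DirectSum.lof A ι Q b) :=
  le_antisymm (iSup_le fun _ => range_le_range_symm_comp_lof Φ fun i hi => hvan i hi _)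
    ((range_le_traceIdeal _).trans hQ)

theorem mul_eq_zero_of_mem_traceIdeal_of_mem_jacobson (Φ : A ≃ₗ[A] ⨁ i, Q i) {b : ι}
    (hvan : ∀ i ≠ b, ∀ g : M →ₗ[A] Q i, g = 0)
    (hrad : ∀ g : M →ₗ[A] Q b, LinearMap.range g ≤ Ring.jacobson A • ⊤ → g = 0)
    {x ρ : A} (hx : x ∈ traceIdeal A M) (hρ : ρ ∈ Ring.jacobson A) : x * ρ = 0 := by
  suffices traceIdeal A M ≤ LinearMap.ker (LinearMap.toSpanSingleton A A ρ) from this hx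
  refine traceIdeal_le_iff.2 fun f y => ?_
  suffices LinearMap.toSpanSingleton A A ρ ∘ₗ f = 0 from LinearMap.congr_fun this y
  refine eq_zero_of_forall_component_comp_eq_zero Φ fun i => ?_
  rcases eq_or_ne i b with rfl | hi
  · refine hrad _ ?_
    rw [← LinearMap.comp_assoc, LinearMap.range_comp]
    refine (Submodule.map_mono ?_).trans (Submodule.map_le_smul_top _ _)
    rintro _ ⟨z, rfl⟩
    exact (Ring.jacobson A).smul_mem (f z) hρ
  · exact hvan i hi _

end Decomposition

open scoped Pointwise in
theorem trace_of_minimal_is_heredity_general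
    (k : Type*) [Field k] (A : Type*) [Ring A]
    {m : ℕ} (P : Fin m → Type*) [∀ i, AddCommGroup (P i)] [∀ i, Module A (P i)]
    [∀ i, Module k (P i)] [∀ i, SMulCommClass A k (P i)]
    (hproj : ∀ i, Module.Projective A (P i))
    (hcomplete : ∃ μ : Fin m → ℕ, Nonempty (A ≃ₗ[A] ⨁ i, (Fin (μ i) → P i)))
    (hEnd : ∀ i (f : P i →ₗ[A] P i), ∃ c : k, f = c • LinearMap.id)
    (r : Fin m → Fin m → Prop)
    (hHom : ∀ i j, (∃ f : P j →ₗ[A] P i, f ≠ 0) → r i j)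
    (b : Fin m) (hb : ∀ j, r j b → j = b) :
    ∀ J' : Ideal A, J' = (⨆ f : P b →ₗ[A] A, LinearMap.range f) →
      (∀ x ∈ J', ∀ a : A, x * a ∈ J') ∧
      Module.Projective A J' ∧
      (∀ x ∈ J', ∀ s ∈ Ideal.jacobson (⊥ : Ideal A), ∀ y ∈ J', x * s * y = 0) ∧
      Submodule.span A ((J' : Set A) * (J' : Set A)) = J' := by
  intro J' hJ'
  obtain rfl : J' = traceIdeal A (P b) := hJ'
  obtain ⟨μ, ⟨Φ⟩⟩ := hcomplete
  have hvan : ∀ i ≠ b, ∀ g : P b →ₗ[A] (Fin (μ i) → P i), g = 0 := fun i hi _ =>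
    LinearMap.eq_zero_of_forall_proj_comp_eq_zero fun _ =>
      by_contra fun h => hi (hb i (hHom i b ⟨_, h⟩))
  have : Module.Finite A (Fin (μ b) → P b) := .of_self_linearEquiv_directSum Φ b
  have : Module.Projective A (Fin (μ b) → P b) := .of_self_linearEquiv_directSum Φ b
  have := hproj b
  rw [Ideal.jacobson_bot]
  refine ⟨fun x hx a => Ideal.mul_mem_right a _ hx, ?_, fun x hx s hs y _ => ?_,
    span_traceIdeal_mul_traceIdeal⟩
  · rw [traceIdeal_eq_range_symm_comp_lof Φ hvan traceIdeal_pi_le]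
    exact .of_equiv (LinearEquiv.ofInjective _ (injective_symm_comp_lof Φ b))
  · rw [mul_assoc]
    exact mul_eq_zero_of_mem_traceIdeal_of_mem_jacobson Φ hvan
      (pi_eq_zero_of_range_le_jacobson_smul (hEnd b)) hx (Ideal.mul_mem_right y _ hs)

open scoped Pointwise in
/-- Let `A` be finite-dimensional with complete irredundant list of
indecomposable projectives `P i`, `End_A(P i) ≅ k`, and `Hom_A(P j, P i) ≠ 0` only if
`i ⊴ j`. If `b` is minimal, then the trace ideal `J'` of `P b` in `A` is a heredity ideal:
two-sided, projective as a left `A`-module, `J'·rad(A)·J' = 0`, and idempotent. -/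
theorem trace_of_minimal_is_heredity
    (k : Type*) [Field k] (A : Type*) [Ring A] [Algebra k A] [FiniteDimensional k A]
    {m : ℕ} (P : Fin m → Type*) [∀ i, AddCommGroup (P i)] [∀ i, Module A (P i)]
    [∀ i, Module k (P i)] [∀ i, IsScalarTower k A (P i)] [∀ i, SMulCommClass A k (P i)]
    (hproj : ∀ i, Module.Projective A (P i))
    (hcomplete : ∃ μ : Fin m → ℕ, Nonempty (A ≃ₗ[A] ⨁ i, (Fin (μ i) → P i)))
    (hirred : ∀ i j, i ≠ j → IsEmpty (P i ≃ₗ[A] P j))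
    (hEnd : ∀ i (f : P i →ₗ[A] P i), ∃ c : k, f = c • LinearMap.id)
    (r : Fin m → Fin m → Prop) (hr : IsPartialOrder (Fin m) r)
    (hHom : ∀ i j, (∃ f : P j →ₗ[A] P i, f ≠ 0) → r i j)
    (b : Fin m) (hb : ∀ j, r j b → j = b) :
    ∀ J' : Ideal A, J' = (⨆ f : P b →ₗ[A] A, LinearMap.range f) →
      (∀ x ∈ J', ∀ a : A, x * a ∈ J') ∧
      Module.Projective A J' ∧
      (∀ x ∈ J', ∀ s ∈ Ideal.jacobson (⊥ : Ideal A), ∀ y ∈ J', x * s * y = 0) ∧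
      Submodule.span A ((J' : Set A) * (J' : Set A)) = J' :=
  trace_of_minimal_is_heredity_general k A P hproj hcomplete hEnd r hHom b hb
end

section
/- Let A be a finite-dimensional k-algebra with a partial order on its weights such that End_A(P(i)) ≅ k for all indecomposable projectives P(i) and Hom_A(P(j), P(i)) ≠ 0 only if i ⊴ j. Then A is quasi-hereditary: it admits a chain of two-sided ideals 0 = J₋₁ ⊆ J₀ ⊆ ⋯ ⊆ Jₙ = A such that each Jₗ/J_{l-1} is a heredity ideal in A/J_{l-1}. -/
open scoped TensorProduct DirectSum

open scoped Pointwise in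
/-- `J/Jp` is a heredity ideal of `A/Jp`, expressed inside `A`: both are two-sided ideals
with `Jp ≤ J`, `J` is idempotent modulo `Jp`, `J·rad(A/Jp)·J ⊆ Jp` (the preimage of
`rad(A/Jp)` in `A` being `Ideal.jacobson Jp`), and `J/Jp` is projective over `A/Jp`, i.e.
an `A`-module direct summand of a finite free `A/Jp`-module. -/
def IsHeredityStep (A : Type*) [Ring A] (Jp J : Ideal A) : Prop :=
  Jp ≤ J ∧
  (∀ x ∈ Jp, ∀ a : A, x * a ∈ Jp) ∧
  (∀ x ∈ J, ∀ a : A, x * a ∈ J) ∧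
  Submodule.span A ((J : Set A) * (J : Set A)) ⊔ Jp = J ∧
  (∀ x ∈ J, ∀ r ∈ Ideal.jacobson Jp, ∀ y ∈ J, x * r * y ∈ Jp) ∧
  ∃ (m : ℕ) (s : (↥J ⧸ (Submodule.comap J.subtype Jp)) →ₗ[A] (Fin m → A ⧸ Jp))
    (p : (Fin m → A ⧸ Jp) →ₗ[A] (↥J ⧸ (Submodule.comap J.subtype Jp))),
    p.comp s = LinearMap.id

/-!
Decompose `A ≅ ⨁ P_t` into indecomposable projectives (with multiplicity), let `e_t` be the
corresponding idempotents, listed so that the weights of the `P_t` never increase, and take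
`J_l = Σ_{s<l} A e_s A`. Right multiplication by `e_s x e_l` is a map `P_s → P_l`; for `s ≥ l`
directedness and `End(P_i) = k` force it to be zero or onto. Hence every nonzero element of
`(A/J_l) e_l` generates it: this gives `e_l rad e_l ⊆ J_l`, and it makes `J_{l+1}/J_l`, a finite
sum of images of `(A/J_l) e_l`, a direct sum of copies of this direct summand of `A/J_l`.
-/

open Set Submodule

section IdealLemmas

variable {A : Type*} [Ring A]

theorem isTwoSided_span_of_mul_mem {S : Set A} (hS : ∀ x ∈ S, ∀ a : A, x * a ∈ S) :
    Ideal.IsTwoSided (span A S) := by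
  refine ⟨fun a hx => ?_⟩
  induction hx using span_induction with
  | mem x hx => exact subset_span (hS x hx a)
  | zero => simp
  | add x y _ _ hx hy => rw [add_mul]; exact add_mem hx hy
  | smul b x _ hx => rw [smul_eq_mul, mul_assoc]; exact Ideal.mul_mem_left _ b hx

theorem IsIdempotentElem.mem_of_mem_jacobson {I : Ideal A} [I.IsTwoSided] {e : A}
    (he : IsIdempotentElem e) (h : e ∈ I.jacobson) : e ∈ I := by
  obtain ⟨z, hz⟩ := Ideal.mem_jacobson_iff.1 h (-1)
  have hze : (z * -1 * e + z - 1) * e = -e :=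
    calc (z * -1 * e + z - 1) * e = z * e - z * (e * e) - e := by noncomm_ring
      _ = -e := by rw [he.eq]; abel
  have := I.mul_mem_right e hz
  rwa [hze, neg_mem_iff] at this

def Ideal.quotientMulRight (J : Ideal A) [J.IsTwoSided] (y : A) : (A ⧸ J) →ₗ[A] A ⧸ J :=
  J.mapQ J (LinearMap.toSpanSingleton A A y) fun _ hx => J.mul_mem_right y hx

@[simp]
theorem Ideal.quotientMulRight_mk (J : Ideal A) [J.IsTwoSided] (y x : A) :
    J.quotientMulRight y (J.mkQ x) = J.mkQ (x * y) :=
  rfl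

end IdealLemmas

section Modules

variable {A Q M : Type*} [Ring A] [AddCommGroup Q] [Module A Q] [AddCommGroup M] [Module A M]

theorem exists_injective_pi_range_eq_biSup (hQ : ∀ V : Submodule A Q, V = ⊥ ∨ V = ⊤)
    {ι : Type*} (f : ι → Q →ₗ[A] M) (s : Finset ι) :
    ∃ (c : ℕ) (Φ : (Fin c → Q) →ₗ[A] M),
      Function.Injective Φ ∧ LinearMap.range Φ = ⨆ q ∈ s, LinearMap.range (f q) := by
  classical
  induction s using Finset.induction_on with
  | empty => exact ⟨0, 0, fun _ _ _ => Subsingleton.elim _ _, by simp⟩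
  | insert a s _ ih =>
    obtain ⟨c, Φ, hΦ, hrange⟩ := ih
    rw [Finset.iSup_insert, ← hrange]
    by_cases hle : LinearMap.range (f a) ≤ LinearMap.range Φ
    · exact ⟨c, Φ, hΦ, (sup_eq_right.2 hle).symm⟩
    have hker : LinearMap.ker (f a) = ⊥ := (hQ _).resolve_right fun h => hle <| by
      rw [LinearMap.ker_eq_top.1 h, LinearMap.range_zero]; exact bot_le
    have hdisj : Disjoint (LinearMap.range (f a)) (LinearMap.range Φ) := by
      have hcomap : comap (f a) (LinearMap.range Φ) = ⊥ :=
        (hQ _).resolve_right fun h => hle (LinearMap.range_le_iff_comap.2 h)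
      rw [disjoint_def]
      rintro _ ⟨v, rfl⟩ hv
      have : v ∈ comap (f a) (LinearMap.range Φ) := hv
      rw [hcomap, mem_bot] at this
      rw [this, map_zero]
    let cons := (Fin.consLinearEquiv A fun _ : Fin (c + 1) => Q).symm
    refine ⟨c + 1, (f a).coprod Φ ∘ₗ cons.toLinearMap, ?_, ?_⟩
    · rw [LinearMap.coe_comp]
      refine Function.Injective.comp ?_ cons.injective
      rw [← LinearMap.ker_eq_bot, LinearMap.ker_coprod_of_disjoint_range _ _ hdisj, hker,
        LinearMap.ker_eq_bot.2 hΦ, prod_bot]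
    · rw [LinearMap.range_comp_of_range_eq_top _ cons.range, LinearMap.range_coprod]

theorem Submodule.eq_bot_or_eq_top_of_mem_span_singleton {g : M}
    (hg : ∀ v ∈ span A {g}, v ≠ 0 → g ∈ span A {v}) (V : Submodule A (span A {g})) :
    V = ⊥ ∨ V = ⊤ := by
  refine or_iff_not_imp_left.2 fun hV => ?_
  obtain ⟨v, hvV, hv0⟩ := (Submodule.ne_bot_iff V).1 hV
  obtain ⟨a, ha⟩ := mem_span_singleton.1 (hg v v.2 (by simpa using hv0))
  have hgV : (⟨g, mem_span_singleton_self g⟩ : span A {g}) ∈ V := by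
    convert V.smul_mem a hvV
    exact ha.symm
  refine eq_top_iff.2 fun w _ => ?_
  obtain ⟨b, hb⟩ := mem_span_singleton.1 w.2
  convert V.smul_mem b hgV
  ext; exact hb.symm

variable {N : Type*} [AddCommGroup N] [Module A N]

theorem exists_comp_eq_id_of_linearEquiv_pi {c : ℕ} (ψ : M ≃ₗ[A] (Fin c → Q))
    (i : Q →ₗ[A] N) (p : N →ₗ[A] Q) (hpi : p ∘ₗ i = LinearMap.id) :
    ∃ (m : ℕ) (s : M →ₗ[A] (Fin m → N)) (p' : (Fin m → N) →ₗ[A] M),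
      p'.comp s = LinearMap.id := by
  refine ⟨c, i.compLeft (Fin c) ∘ₗ ψ.toLinearMap, ψ.symm.toLinearMap ∘ₗ p.compLeft (Fin c), ?_⟩
  ext x
  have hpix : ∀ v, p (i v) = v := LinearMap.congr_fun hpi
  simp [LinearMap.compLeft, Function.comp_def, hpix]

end Modules


section HeredityStep

variable {A : Type*} [Ring A] (J : Ideal A) (e : A)

theorem sup_span_range_mul_induction {p : A → Prop} (mem : ∀ x ∈ J, p x) (mul : ∀ b, p (e * b))
    (zero : p 0) (add : ∀ x y, p x → p y → p (x + y)) (smul : ∀ a x, p x → p (a * x)) {x : A}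
    (hx : x ∈ J ⊔ span A (range (e * ·))) : p x := by
  rw [sup_span] at hx
  induction hx using span_induction with
  | mem x hx => rcases hx with hx | ⟨b, rfl⟩; exacts [mem x hx, mul b]
  | zero => exact zero
  | add x y _ _ hx hy => exact add x y hx hy
  | smul a x _ hx => exact smul a x hx

variable {J e}

theorem mkQ_idem_mem_span_singleton (hsimple : ∀ x, x * e ∈ J ∨ e ∈ span A {x * e}) :
    ∀ v ∈ span A {J.mkQ e}, v ≠ 0 → J.mkQ e ∈ span A {v} := by
  rintro _ hv hv0
  obtain ⟨a, rfl⟩ := mem_span_singleton.1 hv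
  rw [← map_smul] at hv0 ⊢
  rcases hsimple a with h | h
  · exact absurd ((Quotient.mk_eq_zero J).2 h) hv0
  · obtain ⟨b, hb⟩ := mem_span_singleton.1 h
    exact mem_span_singleton.2 ⟨b, by rw [← map_smul]; exact congrArg J.mkQ hb⟩

variable [J.IsTwoSided]

instance isTwoSided_sup_span_range_mul : Ideal.IsTwoSided (J ⊔ span A (range (e * ·))) := by
  rw [sup_span]
  refine isTwoSided_span_of_mul_mem ?_
  rintro x (hx | ⟨b, rfl⟩) a
  · exact Or.inl (J.mul_mem_right a hx)
  · exact Or.inr ⟨b * a, (mul_assoc e b a).symm⟩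

theorem idem_mul_mul_idem_mem (he : IsIdempotentElem e)
    (hsimple : ∀ x, x * e ∈ J ∨ e ∈ span A {x * e}) {c : A} (hc : c ∈ J.jacobson) :
    e * c * e ∈ J := by
  refine (hsimple (e * c)).elim id fun h => ?_
  have hrad : e * c * e ∈ J.jacobson :=
    Ideal.mul_mem_right e _ (Ideal.mul_mem_left _ e hc)
  have heJ : e ∈ J := he.mem_of_mem_jacobson ((span_singleton_le_iff_mem _ _).2 hrad h)
  exact J.mul_mem_right e (J.mul_mem_right c heJ)

theorem idem_mul_mul_mem (he : IsIdempotentElem e)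
    (hsimple : ∀ x, x * e ∈ J ∨ e ∈ span A {x * e}) {c y : A} (hc : c ∈ J.jacobson)
    (hy : y ∈ J ⊔ span A (range (e * ·))) : e * c * y ∈ J := by
  refine sup_span_range_mul_induction J e (p := fun y => ∀ c ∈ J.jacobson, e * c * y ∈ J)
    (fun y hy c _ => Ideal.mul_mem_left _ _ hy) (fun b c hc => ?_) (by simp)
    (fun y z hy hz c hc => by rw [mul_add]; exact add_mem (hy c hc) (hz c hc))
    (fun a y hy c hc => ?_) hy c hc
  · rw [← mul_assoc]; exact J.mul_mem_right b (idem_mul_mul_idem_mem he hsimple hc)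
  · rw [← mul_assoc, mul_assoc e]; exact hy _ (Ideal.mul_mem_right a _ hc)

theorem mul_mul_mem_of_mem_jacobson (he : IsIdempotentElem e)
    (hsimple : ∀ x, x * e ∈ J ∨ e ∈ span A {x * e}) {x r y : A}
    (hx : x ∈ J ⊔ span A (range (e * ·))) (hr : r ∈ J.jacobson)
    (hy : y ∈ J ⊔ span A (range (e * ·))) : x * r * y ∈ J := by
  refine sup_span_range_mul_induction J e (p := fun x => ∀ r ∈ J.jacobson, x * r * y ∈ J)
    (fun x hx r _ => J.mul_mem_right y (J.mul_mem_right r hx)) (fun b r hr => ?_) (by simp)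
    (fun x z hx hz r hr => by rw [add_mul, add_mul]; exact add_mem (hx r hr) (hz r hr))
    (fun a x hx r hr => by simpa only [mul_assoc] using J.mul_mem_left a (hx r hr)) hx r hr
  rw [mul_assoc e]
  exact idem_mul_mul_mem he hsimple (Ideal.mul_mem_left _ b hr) hy

open scoped Pointwise in
theorem span_mul_self_sup_eq (he : IsIdempotentElem e) :
    span A (((J ⊔ span A (range (e * ·)) : Ideal A) : Set A) *
      ((J ⊔ span A (range (e * ·)) : Ideal A) : Set A)) ⊔ J = J ⊔ span A (range (e * ·)) := by
  set J' := J ⊔ span A (range (e * ·))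
  have hmem : ∀ b, e * b ∈ J' := fun b => mem_sup_right (subset_span ⟨b, rfl⟩)
  refine le_antisymm (sup_le ?_ le_sup_left) (sup_le le_sup_right ?_)
  · rw [span_le]
    rintro _ ⟨x, hx, y, _, rfl⟩
    exact J'.mul_mem_right y hx
  · rw [span_le]
    rintro _ ⟨b, rfl⟩
    refine mem_sup_left (subset_span ⟨e, ?_, e * b, hmem b, ?_⟩)
    · simpa using hmem 1
    · exact show e * (e * b) = e * b by rw [← mul_assoc, he.eq]

theorem range_mkQ_comp_subtype_sup_span (R : Type*) [CommRing R] [Algebra R A]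
    (he : IsIdempotentElem e) {n : ℕ} {s : Fin n → A} (hs : span R (range s) = ⊤) :
    LinearMap.range (J.mkQ ∘ₗ (J ⊔ span A (range (e * ·))).subtype) =
      ⨆ q, LinearMap.range (J.quotientMulRight (e * s q) ∘ₗ (span A {J.mkQ e}).subtype) := by
  refine le_antisymm ?_ (iSup_le fun q => ?_)
  · rintro _ ⟨⟨y, hy⟩, rfl⟩
    refine sup_span_range_mul_induction J e (p := fun y => J.mkQ y ∈ ⨆ q, LinearMap.range
        (J.quotientMulRight (e * s q) ∘ₗ (span A {J.mkQ e}).subtype)) (fun y hy => ?_)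
      (fun b => ?_) (zero_mem _) (fun y z hy hz => by rw [map_add]; exact add_mem hy hz)
      (fun a y hy => by rw [← smul_eq_mul, map_smul]; exact smul_mem _ a hy) hy
    · rw [show J.mkQ y = 0 from (Quotient.mk_eq_zero J).2 hy]; exact zero_mem _
    obtain ⟨r, rfl⟩ := (mem_span_range_iff_exists_fun R).1 (hs ▸ mem_top : b ∈ span R _)
    simp only [Finset.mul_sum, Algebra.smul_def, map_sum]
    refine sum_mem fun q _ => ?_
    rw [Algebra.left_comm, ← smul_eq_mul, map_smul]
    refine smul_mem _ _ (mem_iSup_of_mem q ⟨⟨J.mkQ e, mem_span_singleton_self _⟩, ?_⟩)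
    simp only [LinearMap.comp_apply, Submodule.coe_subtype, Ideal.quotientMulRight_mk,
      ← mul_assoc, he.eq]
  · rintro _ ⟨⟨v, hv⟩, rfl⟩
    obtain ⟨a, rfl⟩ := mem_span_singleton.1 hv
    refine ⟨⟨a * (e * s q), mem_sup_right (smul_mem _ a (subset_span ⟨s q, rfl⟩))⟩, ?_⟩
    simp only [LinearMap.comp_apply, Submodule.coe_subtype, ← map_smul, smul_eq_mul,
      Ideal.quotientMulRight_mk, mul_assoc, ← mul_assoc e, he.eq]

theorem exists_comp_eq_id_quotient (R : Type*) [CommRing R] [Algebra R A] [Module.Finite R A]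
    (he : IsIdempotentElem e) (hsimple : ∀ x, x * e ∈ J ∨ e ∈ span A {x * e}) :
    ∃ (m : ℕ) (s : (↥(J ⊔ span A (range (e * ·))) ⧸
        comap (J ⊔ span A (range (e * ·))).subtype J) →ₗ[A] (Fin m → A ⧸ J))
      (p : (Fin m → A ⧸ J) →ₗ[A] (↥(J ⊔ span A (range (e * ·))) ⧸
        comap (J ⊔ span A (range (e * ·))).subtype J)),
      p.comp s = LinearMap.id := by
  set J' := J ⊔ span A (range (e * ·))
  set P₀ := span A {J.mkQ e}
  obtain ⟨n, s, hs⟩ := Module.Finite.exists_fin (R := R) (M := A)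
  obtain ⟨c, Φ, hΦ, hΦrange⟩ := exists_injective_pi_range_eq_biSup
    (eq_bot_or_eq_top_of_mem_span_singleton (mkQ_idem_mem_span_singleton hsimple))
    (fun q => J.quotientMulRight (e * s q) ∘ₗ P₀.subtype) Finset.univ
  simp only [Finset.mem_univ, iSup_pos] at hΦrange
  let h : J' →ₗ[A] A ⧸ J := J.mkQ ∘ₗ J'.subtype
  have hker : comap J'.subtype J = LinearMap.ker h := by rw [LinearMap.ker_comp, ker_mkQ]
  have hrange : LinearMap.range h = LinearMap.range Φ := by
    rw [hΦrange, range_mkQ_comp_subtype_sup_span R he hs]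
  let ψ : (J' ⧸ comap J'.subtype J) ≃ₗ[A] (Fin c → P₀) :=
    (quotEquivOfEq _ _ hker).trans <| h.quotKerEquivRange.trans <|
      (LinearEquiv.ofEq _ _ hrange).trans (LinearEquiv.ofInjective Φ hΦ).symm
  let π : (A ⧸ J) →ₗ[A] P₀ := (J.quotientMulRight e).codRestrict P₀ fun v => by
    obtain ⟨x, rfl⟩ := J.mkQ_surjective v
    rw [Ideal.quotientMulRight_mk, ← smul_eq_mul, map_smul]
    exact smul_mem _ x (mem_span_singleton_self _)
  refine exists_comp_eq_id_of_linearEquiv_pi ψ P₀.subtype π ?_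
  refine LinearMap.ext fun ⟨v, hv⟩ => Subtype.ext ?_
  obtain ⟨a, rfl⟩ := mem_span_singleton.1 hv
  change J.quotientMulRight e (a • J.mkQ e) = a • J.mkQ e
  rw [map_smul, Ideal.quotientMulRight_mk, he.eq]

theorem isHeredityStep_sup_span_range_mul (R : Type*) [CommRing R] [Algebra R A]
    [Module.Finite R A] (he : IsIdempotentElem e)
    (hsimple : ∀ x, x * e ∈ J ∨ e ∈ span A {x * e}) :
    IsHeredityStep A J (J ⊔ span A (range (e * ·))) :=
  ⟨le_sup_left, fun _ hx a => J.mul_mem_right a hx, fun _ hx a => Ideal.mul_mem_right a _ hx,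
    span_mul_self_sup_eq he, fun _ hx _ hr _ hy => mul_mul_mem_of_mem_jacobson he hsimple hx hr hy,
    exists_comp_eq_id_quotient R he hsimple⟩

end HeredityStep

section Chain

variable {A : Type*} [Ring A] (e : ℕ → A)

def chainIdeal : ℕ → Ideal A
  | 0 => ⊥
  | l + 1 => chainIdeal l ⊔ span A (range (e l * ·))

instance isTwoSided_chainIdeal : ∀ l, (chainIdeal e l).IsTwoSided
  | 0 => inferInstanceAs (⊥ : Ideal A).IsTwoSided
  | l + 1 => haveI := isTwoSided_chainIdeal l; isTwoSided_sup_span_range_mul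

theorem chainIdeal_mono : Monotone (chainIdeal e) :=
  monotone_nat_of_le_succ fun _ => le_sup_left

theorem mul_mem_chainIdeal {s l : ℕ} (hsl : s < l) (b : A) : e s * b ∈ chainIdeal e l :=
  chainIdeal_mono e hsl (mem_sup_right (subset_span ⟨b, rfl⟩))

theorem chainIdeal_eq_top {N : ℕ} (hsum : ∑ s ∈ Finset.range N, e s = 1) :
    chainIdeal e N = ⊤ := by
  rw [Ideal.eq_top_iff_one, ← hsum]
  exact sum_mem fun s hs => by simpa using mul_mem_chainIdeal e (Finset.mem_range.1 hs) 1

theorem mul_mem_chainIdeal_or_mem_span {N l : ℕ} (hsum : ∑ s ∈ Finset.range N, e s = 1)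
    (hsplit : ∀ s, l ≤ s → s < N → ∀ x, e s * x * e l = 0 ∨ e l ∈ span A {e s * x * e l})
    (x : A) : x * e l ∈ chainIdeal e l ∨ e l ∈ span A {x * e l} := by
  refine or_iff_not_imp_right.2 fun hspan => ?_
  rw [← one_mul (x * e l), ← hsum, Finset.sum_mul]
  refine sum_mem fun s hs => ?_
  rw [← mul_assoc]
  by_cases hsl : s < l
  · rw [mul_assoc]; exact mul_mem_chainIdeal e hsl _
  rcases hsplit s (not_lt.1 hsl) (Finset.mem_range.1 hs) x with h | h
  · rw [h]; exact zero_mem _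
  · refine absurd ((span_singleton_le_iff_mem _ _).2 ?_ h) hspan
    rw [mul_assoc]; exact smul_mem _ _ (mem_span_singleton_self _)

theorem exists_heredity_chain (R : Type*) [CommRing R] [Algebra R A] [Module.Finite R A]
    (N : ℕ) (hidem : ∀ l < N, IsIdempotentElem (e l)) (hsum : ∑ s ∈ Finset.range N, e s = 1)
    (hsplit : ∀ l s, l ≤ s → s < N → ∀ x, e s * x * e l = 0 ∨ e l ∈ span A {e s * x * e l}) :
    ∃ (n : ℕ) (J : ℕ → Ideal A), J 0 = ⊥ ∧ J n = ⊤ ∧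
      ∀ l < n, IsHeredityStep A (J l) (J (l + 1)) :=
  ⟨N, chainIdeal e, rfl, chainIdeal_eq_top e hsum, fun l hl =>
    isHeredityStep_sup_span_range_mul R (hidem l hl)
      (mul_mem_chainIdeal_or_mem_span e hsum (hsplit l))⟩

end Chain

theorem exists_equiv_fin_monotone {T α : Type*} [Fintype T] [LinearOrder α] (f : T → α) :
    ∃ σ : Fin (Fintype.card T) ≃ T, Monotone (f ∘ σ) :=
  ⟨(Tuple.sort (f ∘ (Fintype.equivFin T).symm)).trans (Fintype.equivFin T).symm,
    Tuple.monotone_sort (f ∘ (Fintype.equivFin T).symm)⟩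

/-- Ties in `key` are harmless: `hsplit` is then required in both directions. -/
theorem exists_heredity_chain_of_key (R : Type*) [CommRing R] {A : Type*} [Ring A]
    [Algebra R A] [Module.Finite R A] {T : Type*} [Fintype T] (e : T → A) (key : T → ℕ)
    (hidem : ∀ t, IsIdempotentElem (e t)) (hsum : ∑ t, e t = 1)
    (hsplit : ∀ s t, key t ≤ key s → ∀ x, e s * x * e t = 0 ∨ e t ∈ span A {e s * x * e t}) :
    ∃ (n : ℕ) (J : ℕ → Ideal A), J 0 = ⊥ ∧ J n = ⊤ ∧
      ∀ l < n, IsHeredityStep A (J l) (J (l + 1)) := by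
  obtain ⟨σ, hσ⟩ := exists_equiv_fin_monotone key
  refine exists_heredity_chain
    (fun n => if h : n < Fintype.card T then e (σ ⟨n, h⟩) else 0) R (Fintype.card T)
    (fun l hl => by simpa only [dif_pos hl] using hidem _) ?_ fun l s hls hs x => ?_
  · rw [Finset.sum_range, ← hsum, ← Equiv.sum_comp σ e]
    exact Finset.sum_congr rfl fun q _ => dif_pos q.isLt
  · simp only [dif_pos hs, dif_pos (hls.trans_lt hs)]
    exact hsplit _ _ (hσ (show (⟨l, _⟩ : Fin _) ≤ ⟨s, hs⟩ from hls)) x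

section Summands

variable {A : Type*} [Ring A] {Q₁ Q₂ : Type*} [AddCommGroup Q₁] [Module A Q₁] [AddCommGroup Q₂]
  [Module A Q₂]

theorem mul_apply_apply_one (ι : Q₁ →ₗ[A] A) (π : A →ₗ[A] Q₁) (x : A) :
    x * ι (π 1) = ι (π x) := by
  rw [← smul_eq_mul, ← map_smul, ← map_smul, smul_eq_mul, mul_one]

theorem isIdempotentElem_apply_apply_one {ι : Q₁ →ₗ[A] A} {π : A →ₗ[A] Q₁}
    (h : Function.LeftInverse π ι) : IsIdempotentElem (ι (π 1)) := by
  rw [IsIdempotentElem, mul_apply_apply_one, h]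

/-- With `e₁ = ι₁ (π₁ 1)` and `e₂ = ι₂ (π₂ 1)`, right multiplication by an element of `e₁ A e₂`
is the map `A e₁ ≅ Q₁ → Q₂ ≅ A e₂` tested here. -/
theorem eq_zero_or_mem_span_of_eq_zero_or_surjective {ι₁ : Q₁ →ₗ[A] A} {π₁ : A →ₗ[A] Q₁}
    {ι₂ : Q₂ →ₗ[A] A} {π₂ : A →ₗ[A] Q₂} (h₁ : IsIdempotentElem (ι₁ (π₁ 1)))
    (h₂ : IsIdempotentElem (ι₂ (π₂ 1)))
    (hmap : ∀ f : Q₁ →ₗ[A] Q₂, f = 0 ∨ Function.Surjective f) (x : A) :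
    ι₁ (π₁ 1) * x * ι₂ (π₂ 1) = 0 ∨
      ι₂ (π₂ 1) ∈ span A {ι₁ (π₁ 1) * x * ι₂ (π₂ 1)} := by
  set y := ι₁ (π₁ 1) * x * ι₂ (π₂ 1)
  have hy₁ : ι₁ (π₁ 1) * y = y := by simp only [y, ← mul_assoc, h₁.eq]
  have hy₂ : y * ι₂ (π₂ 1) = y := by simp only [y, mul_assoc, h₂.eq]
  rcases hmap (π₂ ∘ₗ LinearMap.toSpanSingleton A A y ∘ₗ ι₁) with h | h
  · left
    have h1 : π₂ (ι₁ (π₁ 1) * y) = 0 := LinearMap.congr_fun h (π₁ 1)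
    rw [← hy₂, mul_apply_apply_one, ← hy₁, h1, map_zero]
  · right
    obtain ⟨v, hv⟩ := h (π₂ 1)
    refine mem_span_singleton.2 ⟨ι₁ v, ?_⟩
    calc ι₁ v • y = ι₁ v * y * ι₂ (π₂ 1) := by rw [smul_eq_mul, mul_assoc, hy₂]
      _ = ι₂ (π₂ 1) := by rw [mul_apply_apply_one]; exact congrArg ι₂ hv

end Summands

section DirectSum

variable {A : Type*} [Ring A] {m : ℕ} {P : Fin m → Type*} [∀ i, AddCommGroup (P i)]
  [∀ i, Module A (P i)] {μ : Fin m → ℕ}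

variable (A P μ) in
def sigmaIncl (t : Σ i, Fin (μ i)) : P t.1 →ₗ[A] ⨁ i, (Fin (μ i) → P i) :=
  DirectSum.lof A _ (fun i => Fin (μ i) → P i) t.1 ∘ₗ LinearMap.single A (fun _ => P t.1) t.2

variable (A P μ) in
def sigmaProj (t : Σ i, Fin (μ i)) : (⨁ i, (Fin (μ i) → P i)) →ₗ[A] P t.1 :=
  LinearMap.proj t.2 ∘ₗ DirectSum.component A _ (fun i => Fin (μ i) → P i) t.1

theorem sigmaProj_sigmaIncl (t : Σ i, Fin (μ i)) (v : P t.1) :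
    sigmaProj A P μ t (sigmaIncl A P μ t v) = v := by
  simp [sigmaProj, sigmaIncl, DirectSum.component.lof_self]

theorem sum_sigmaIncl_sigmaProj (x : ⨁ i, (Fin (μ i) → P i)) :
    ∑ t, sigmaIncl A P μ t (sigmaProj A P μ t x) = x := by
  rw [← Finset.univ_sigma_univ, Finset.sum_sigma]
  conv_rhs => rw [← DirectSum.sum_univ_of x]
  refine Finset.sum_congr rfl fun i _ => ?_
  simp only [sigmaIncl, sigmaProj, LinearMap.comp_apply, LinearMap.proj_apply]
  rw [← map_sum (DirectSum.lof A (Fin m) (fun i => Fin (μ i) → P i) i), DirectSum.lof_eq_of]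
  exact congrArg _ (Finset.univ_sum_single (x i))

theorem exists_idempotents_of_linearEquiv_directSum (φ : A ≃ₗ[A] ⨁ i, (Fin (μ i) → P i)) :
    ∃ e : (Σ i, Fin (μ i)) → A, (∀ t, IsIdempotentElem (e t)) ∧ ∑ t, e t = 1 ∧
      ∀ s t, (∀ f : P s.1 →ₗ[A] P t.1, f = 0 ∨ Function.Surjective f) →
        ∀ x, e s * x * e t = 0 ∨ e t ∈ span A {e s * x * e t} := by
  let ι (t : Σ i, Fin (μ i)) : P t.1 →ₗ[A] A := φ.symm.toLinearMap ∘ₗ sigmaIncl A P μ t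
  let π (t : Σ i, Fin (μ i)) : A →ₗ[A] P t.1 := sigmaProj A P μ t ∘ₗ φ.toLinearMap
  have hπι (t : Σ i, Fin (μ i)) : Function.LeftInverse (π t) (ι t) := fun v => by
    simp [ι, π, sigmaProj_sigmaIncl]
  refine ⟨fun t => ι t (π t 1), fun t => isIdempotentElem_apply_apply_one (hπι t), ?_,
    fun s t hmap => eq_zero_or_mem_span_of_eq_zero_or_surjective
      (isIdempotentElem_apply_apply_one (hπι s)) (isIdempotentElem_apply_apply_one (hπι t)) hmap⟩
  simp only [ι, π, LinearMap.comp_apply, LinearEquiv.coe_coe, ← map_sum, sum_sigmaIncl_sigmaProj,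
    LinearEquiv.symm_apply_apply]

end DirectSum

theorem LinearMap.eq_zero_or_surjective_of_forall_eq_smul_id {k A ι : Type*} [Field k] [Ring A]
    {P : ι → Type*} [∀ i, AddCommGroup (P i)] [∀ i, Module A (P i)] [∀ i, Module k (P i)]
    [∀ i, SMulCommClass A k (P i)]
    (hEnd : ∀ i (f : P i →ₗ[A] P i), ∃ c : k, f = c • LinearMap.id) {i j : ι}
    (hij : ∀ f : P i →ₗ[A] P j, f ≠ 0 → i = j) (f : P i →ₗ[A] P j) :
    f = 0 ∨ Function.Surjective f := by
  refine or_iff_not_imp_left.2 fun hf => ?_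
  obtain rfl := hij f hf
  obtain ⟨c, rfl⟩ := hEnd i f
  have hc : c ≠ 0 := by rintro rfl; exact hf (zero_smul k _)
  exact fun v => ⟨c⁻¹ • v, by simp [smul_smul, mul_inv_cancel₀ hc]⟩

theorem Set.ncard_setOf_rel_lt {α : Type*} [Finite α] {r : α → α → Prop} [IsPartialOrder α r]
    {i j : α} (hij : r i j) (hne : i ≠ j) :
    {x | r j x}.ncard < {x | r i x}.ncard :=
  Set.ncard_lt_ncard ⟨fun _ hx => _root_.trans hij hx,
    fun hsub => hne (antisymm_of r hij (hsub (refl_of r i)))⟩ (Set.toFinite _)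

theorem directed_is_quasi_hereditary_general
    (k : Type*) [Field k] (A : Type*) [Ring A] [Algebra k A] [FiniteDimensional k A]
    {m : ℕ} (P : Fin m → Type*) [∀ i, AddCommGroup (P i)] [∀ i, Module A (P i)]
    [∀ i, Module k (P i)] [∀ i, SMulCommClass A k (P i)]
    (hcomplete : ∃ μ : Fin m → ℕ, Nonempty (A ≃ₗ[A] ⨁ i, (Fin (μ i) → P i)))
    (hEnd : ∀ i (f : P i →ₗ[A] P i), ∃ c : k, f = c • LinearMap.id)
    (r : Fin m → Fin m → Prop) (hr : IsPartialOrder (Fin m) r)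
    (hHom : ∀ i j, (∃ f : P j →ₗ[A] P i, f ≠ 0) → r i j) :
    ∃ (n : ℕ) (J : ℕ → Ideal A), J 0 = ⊥ ∧ J n = ⊤ ∧
      ∀ l < n, IsHeredityStep A (J l) (J (l + 1)) := by
  have := hr
  obtain ⟨μ, ⟨φ⟩⟩ := hcomplete
  obtain ⟨e, hidem, hsum, hsplit⟩ := exists_idempotents_of_linearEquiv_directSum φ
  -- ranking by the number of weights above puts the projectives with larger weights first
  refine exists_heredity_chain_of_key k e (fun t => {j | r t.1 j}.ncard) hidem hsum
    fun s t hst => hsplit s t fun f =>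
      LinearMap.eq_zero_or_surjective_of_forall_eq_smul_id hEnd (fun g hg => ?_) f
  by_contra hne
  exact (Set.ncard_setOf_rel_lt (hHom _ _ ⟨g, hg⟩) (Ne.symm hne)).not_ge hst

/-- A finite-dimensional algebra whose indecomposable projectives have
scalar endomorphism rings and are directed by a partial order (`Hom(P j, P i) ≠ 0` only if
`i ⊴ j`) is quasi-hereditary: it admits a chain of two-sided ideals
`0 = J₋₁ ⊆ J₀ ⊆ ⋯ ⊆ Jₙ = A` with each `Jₗ/J_{l-1}` a heredity ideal of `A/J_{l-1}`. -/
theorem directed_is_quasi_hereditary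
    (k : Type*) [Field k] (A : Type*) [Ring A] [Algebra k A] [FiniteDimensional k A]
    {m : ℕ} (P : Fin m → Type*) [∀ i, AddCommGroup (P i)] [∀ i, Module A (P i)]
    [∀ i, Module k (P i)] [∀ i, IsScalarTower k A (P i)] [∀ i, SMulCommClass A k (P i)]
    (hproj : ∀ i, Module.Projective A (P i))
    (hcomplete : ∃ μ : Fin m → ℕ, Nonempty (A ≃ₗ[A] ⨁ i, (Fin (μ i) → P i)))
    (hirred : ∀ i j, i ≠ j → IsEmpty (P i ≃ₗ[A] P j))
    (hEnd : ∀ i (f : P i →ₗ[A] P i), ∃ c : k, f = c • LinearMap.id)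
    (r : Fin m → Fin m → Prop) (hr : IsPartialOrder (Fin m) r)
    (hHom : ∀ i j, (∃ f : P j →ₗ[A] P i, f ≠ 0) → r i j) :
    ∃ (n : ℕ) (J : ℕ → Ideal A), J 0 = ⊥ ∧ J n = ⊤ ∧
      ∀ l < n, IsHeredityStep A (J l) (J (l + 1)) :=
  directed_is_quasi_hereditary_general k A P hcomplete hEnd r hr hHom
end

section
/- If (A, A⁺, A⁻) and (B, B⁺, B⁻) are Reedy algebras over a field k, then A ⊗ₖ B is a Reedy algebra with subalgebras A⁺ ⊗ₖ B⁺ and A⁻ ⊗ₖ B⁻, idempotents eᵢ ⊗ fⱼ, and degree function deg(eᵢ ⊗ fⱼ) = deg(eᵢ) + deg(fⱼ). -/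
open scoped TensorProduct DirectSum

/-! Corners of `A ⊗ B` cut out by pure tensors of idempotents are tensor products of corners,
`(e ⊗ f) (S ⊗ T) (e' ⊗ f') = e S e' ⊗ f T f'`. So their dimensions multiply, and a nonzero corner
of `A⁺ ⊗ B⁺` (or `A⁻ ⊗ B⁻`) has nonzero factors, which gives the degree conditions. Since the
tensor product distributes over direct sums, the multiplication map of `A ⊗ B` is, up to a linear
isomorphism of its source, the tensor product of those of `A` and `B`; over a field this is again
injective, with range the tensor product of the ranges. -/

open TensorProduct DirectSum

section DirectSum

variable {R : Type*} [CommSemiring R] {ι κ : Type*} [DecidableEq ι] [DecidableEq κ]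
  {M : ι → Type*} {N : κ → Type*} {X : ι × κ → Type*} {P Q : Type*}
  [∀ i, AddCommMonoid (M i)] [∀ i, Module R (M i)] [∀ j, AddCommMonoid (N j)] [∀ j, Module R (N j)]
  [∀ p, AddCommMonoid (X p)] [∀ p, Module R (X p)]
  [AddCommMonoid P] [Module R P] [AddCommMonoid Q] [Module R Q]

theorem TensorProduct.exists_toModule_comp_eq_map_toModule
    (φ : ∀ i, M i →ₗ[R] P) (ψ : ∀ j, N j →ₗ[R] Q) (χ : ∀ p, X p →ₗ[R] P ⊗[R] Q)
    (h : ∀ p, ∃ Φ : (M p.1 ⊗[R] N p.2) ≃ₗ[R] X p, χ p ∘ₗ Φ.toLinearMap = map (φ p.1) (ψ p.2)) :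
    ∃ Ψ : ((⨁ i, M i) ⊗[R] ⨁ j, N j) ≃ₗ[R] ⨁ p, X p,
      toModule R _ _ χ ∘ₗ Ψ.toLinearMap = map (toModule R _ _ φ) (toModule R _ _ ψ) := by
  choose Φ hΦ using h
  refine ⟨TensorProduct.directSum R R M N ≪≫ₗ DFinsupp.mapRange.linearEquiv Φ, ?_⟩
  ext i x j y
  have hij := congr($(hΦ (i, j)) (x ⊗ₜ y))
  simp only [LinearMap.coe_comp, LinearEquiv.coe_coe, Function.comp_apply, map_tmul] at hij
  simp only [AlgebraTensorModule.curry_apply, curry_apply, LinearMap.coe_comp,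
    LinearEquiv.coe_coe, Function.comp_apply, LinearMap.coe_restrictScalars, map_tmul,
    toModule_lof, ← hij]
  rw [LinearEquiv.trans_apply, TensorProduct.directSum_lof_tmul_lof]
  erw [DFinsupp.mapRange.linearEquiv_apply, DFinsupp.mapRange_single]
  exact toModule_lof R (i, j) _

end DirectSum

section Corner

variable {k : Type*} [Field k] {A B : Type*} [Ring A] [Algebra k A] [Ring B] [Algebra k B]

theorem mulTensor_tmul (M N : Submodule k A) (x : M) (y : N) :
    mulTensor k M N (x ⊗ₜ y) = (x : A) * y :=
  rfl

theorem finrank_range_mapIncl (p : Submodule k A) (q : Submodule k B) :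
    Module.finrank k (LinearMap.range (mapIncl p q)) = Module.finrank k p * Module.finrank k q := by
  rw [LinearMap.finrank_range_of_inj (Module.Flat.tensorProduct_mapIncl_injective_of_left p q),
    Module.finrank_tensorProduct]

theorem ne_bot_and_ne_bot_of_range_mapIncl_ne_bot {p : Submodule k A} {q : Submodule k B}
    (h : LinearMap.range (mapIncl p q) ≠ ⊥) : p ≠ ⊥ ∧ q ≠ ⊥ := by
  rw [range_mapIncl] at h
  exact ⟨fun hp => h (hp ▸ Submodule.map₂_bot_left _ _),
    fun hq => h (hq ▸ Submodule.map₂_bot_right _ _)⟩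

theorem exists_mulTensor_comp_eq_map (P M : Submodule k A) (Q N : Submodule k B)
    {PQ MN : Submodule k (A ⊗[k] B)} (hPQ : PQ = LinearMap.range (mapIncl P Q))
    (hMN : MN = LinearMap.range (mapIncl M N)) :
    ∃ Φ : ((P ⊗[k] M) ⊗[k] (Q ⊗[k] N)) ≃ₗ[k] PQ ⊗[k] MN,
      mulTensor k PQ MN ∘ₗ Φ.toLinearMap = map (mulTensor k P M) (mulTensor k Q N) := by
  subst hPQ hMN
  refine ⟨tensorTensorTensorComm k P M Q N ≪≫ₗ
    congr (.ofInjective _ (Module.Flat.tensorProduct_mapIncl_injective_of_left P Q))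
      (.ofInjective _ (Module.Flat.tensorProduct_mapIncl_injective_of_left M N)), ?_⟩
  ext p m q n
  simp [mulTensor_tmul]

theorem cornerSpace_eq_map_span (f e : A) (S : Set A) :
    cornerSpace k f e S = (Submodule.span k S).map (LinearMap.mulLeftRight k (f, e)) := by
  rw [Submodule.map_span, cornerSpace]
  congr 1
  ext x
  simp [eq_comm]

theorem mulLeftRight_tmul (f e : A) (f' e' : B) :
    LinearMap.mulLeftRight k (f ⊗ₜ[k] f', e ⊗ₜ[k] e') =
      map (LinearMap.mulLeftRight k (f, e)) (LinearMap.mulLeftRight k (f', e')) :=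
  TensorProduct.ext' fun _ _ => by simp [Algebra.TensorProduct.tmul_mul_tmul]

theorem cornerSpace_tmul (f e : A) (f' e' : B) {S : Set A} {T : Set B} {U : Set (A ⊗[k] B)}
    (hU : Submodule.span k U =
      LinearMap.range (mapIncl (Submodule.span k S) (Submodule.span k T))) :
    cornerSpace k (f ⊗ₜ[k] f') (e ⊗ₜ[k] e') U =
      LinearMap.range (mapIncl (cornerSpace k f e S) (cornerSpace k f' e' T)) := by
  rw [cornerSpace_eq_map_span, hU, range_mapIncl, mulLeftRight_tmul, Submodule.map_map₂,
    range_mapIncl, cornerSpace_eq_map_span, cornerSpace_eq_map_span,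
    Submodule.map₂_map_left, Submodule.map₂_map_right]
  rfl

theorem span_range_tensorProductMap (S : Subalgebra k A) (T : Subalgebra k B) :
    Submodule.span k ((Algebra.TensorProduct.map S.val T.val).range : Set (A ⊗[k] B)) =
      LinearMap.range (mapIncl (Submodule.span k (S : Set A)) (Submodule.span k (T : Set B))) := by
  have hS : Submodule.span k (S : Set A) = Subalgebra.toSubmodule S :=
    Submodule.span_eq (Subalgebra.toSubmodule S)
  have hT : Submodule.span k (T : Set B) = Subalgebra.toSubmodule T :=
    Submodule.span_eq (Subalgebra.toSubmodule T)
  rw [hS, hT]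
  -- the range of `Algebra.TensorProduct.map S.val T.val` is definitionally that of `mapIncl`
  exact Submodule.span_eq
    (LinearMap.range (mapIncl (Subalgebra.toSubmodule S) (Subalgebra.toSubmodule T)))

theorem span_univ_tensorProduct :
    Submodule.span k (Set.univ : Set (A ⊗[k] B)) =
      LinearMap.range (mapIncl (Submodule.span k (Set.univ : Set A))
        (Submodule.span k (Set.univ : Set B))) := by
  rw [Submodule.span_univ, Submodule.span_univ, Submodule.span_univ, range_mapIncl,
    map₂_mk_top_top_eq_top]

end Corner

theorem Prod.add_lt_add_of_ne {ι κ α : Type*} [AddCommMonoid α] [PartialOrder α]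
    [IsOrderedCancelAddMonoid α] {d : ι → α} {d' : κ → α} {p q : ι × κ} (hpq : p ≠ q)
    (h₁ : p.1 ≠ q.1 → d p.1 < d q.1) (h₂ : p.2 ≠ q.2 → d' p.2 < d' q.2) :
    d p.1 + d' p.2 < d q.1 + d' q.2 := by
  rcases eq_or_ne p.1 q.1 with h | h
  · rw [h]
    exact add_lt_add_right (h₂ fun h' => hpq (Prod.ext h h')) _
  · refine add_lt_add_of_lt_of_le (h₁ h) ?_
    rcases eq_or_ne p.2 q.2 with h' | h'
    · rw [h']
    · exact (h₂ h').le

theorem CompleteOrthogonalIdempotents.tmul {R A B : Type*} [CommSemiring R] [Semiring A]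
    [Algebra R A] [Semiring B] [Algebra R B] {ι κ : Type*} [Fintype ι] [Fintype κ]
    {e : ι → A} {f : κ → B} (he : CompleteOrthogonalIdempotents e)
    (hf : CompleteOrthogonalIdempotents f) :
    CompleteOrthogonalIdempotents fun p : ι × κ => e p.1 ⊗ₜ[R] f p.2 where
  idem p := by
    rw [IsIdempotentElem, Algebra.TensorProduct.tmul_mul_tmul, (he.idem _).eq, (hf.idem _).eq]
  ortho p q hpq := by
    dsimp only
    rw [Algebra.TensorProduct.tmul_mul_tmul]
    rcases eq_or_ne p.1 q.1 with h | h
    · rw [hf.ortho fun h' => hpq (Prod.ext h h'), tmul_zero]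
    · rw [he.ortho h, zero_tmul]
  complete := by
    rw [Fintype.sum_prod_type]
    simp_rw [← tmul_sum, ← sum_tmul, he.complete, hf.complete]
    rfl

section Reedy

variable {k : Type*} [Field k] {A B : Type*} [Ring A] [Algebra k A] [Ring B] [Algebra k B]

theorem cornerSpace_tmul_range_map (S : Subalgebra k A) (T : Subalgebra k B)
    (f e : A) (f' e' : B) :
    cornerSpace k (f ⊗ₜ[k] f') (e ⊗ₜ[k] e')
        ((Algebra.TensorProduct.map S.val T.val).range : Set (A ⊗[k] B)) =
      LinearMap.range (mapIncl (cornerSpace k f e (S : Set A)) (cornerSpace k f' e' (T : Set B))) :=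
  cornerSpace_tmul f e f' e' (span_range_tensorProductMap S T)

theorem ne_bot_and_ne_bot_of_cornerSpace_tmul_range_map_ne_bot {S : Subalgebra k A}
    {T : Subalgebra k B} {f e : A} {f' e' : B}
    (h : cornerSpace k (f ⊗ₜ[k] f') (e ⊗ₜ[k] e')
      ((Algebra.TensorProduct.map S.val T.val).range : Set (A ⊗[k] B)) ≠ ⊥) :
    cornerSpace k f e (S : Set A) ≠ ⊥ ∧ cornerSpace k f' e' (T : Set B) ≠ ⊥ :=
  ne_bot_and_ne_bot_of_range_mapIncl_ne_bot (cornerSpace_tmul_range_map S T f e f' e' ▸ h)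

variable {ι κ : Type*} [Fintype ι] [DecidableEq ι] [Fintype κ] [DecidableEq κ]

theorem IsReedy.completeOrthogonalIdempotents_s8 {e : ι → A} {deg : ι → ℕ}
    {Ap Am : Subalgebra k A} (h : IsReedy k e deg Ap Am) : CompleteOrthogonalIdempotents e :=
  ⟨⟨h.idem, h.orth⟩, h.complete⟩

variable (e : ι → A) (f : κ → B) (Sp Sm : Subalgebra k A) (Tp Tm : Subalgebra k B)

theorem exists_reedyMulMap_tmul_comp_eq_map (j i : ι × κ) :
    ∃ Ψ : _ ≃ₗ[k] _,
      reedyMulMap k (fun p : ι × κ => e p.1 ⊗ₜ[k] f p.2)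
          ((Algebra.TensorProduct.map Sp.val Tp.val).range : Set (A ⊗[k] B))
          ((Algebra.TensorProduct.map Sm.val Tm.val).range : Set (A ⊗[k] B)) j i ∘ₗ
        Ψ.toLinearMap =
      TensorProduct.map (reedyMulMap k e (Sp : Set A) (Sm : Set A) j.1 i.1)
        (reedyMulMap k f (Tp : Set B) (Tm : Set B) j.2 i.2) :=
  exists_toModule_comp_eq_map_toModule _ _ _ fun _ =>
    exists_mulTensor_comp_eq_map _ _ _ _ (cornerSpace_tmul_range_map ..)
      (cornerSpace_tmul_range_map ..)

variable {e f Sp Sm Tp Tm}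

theorem reedyMulMap_tmul_injective {j i : ι × κ}
    (he : Function.Injective (reedyMulMap k e (Sp : Set A) (Sm : Set A) j.1 i.1))
    (hf : Function.Injective (reedyMulMap k f (Tp : Set B) (Tm : Set B) j.2 i.2)) :
    Function.Injective (reedyMulMap k (fun p : ι × κ => e p.1 ⊗ₜ[k] f p.2)
      ((Algebra.TensorProduct.map Sp.val Tp.val).range : Set (A ⊗[k] B))
      ((Algebra.TensorProduct.map Sm.val Tm.val).range : Set (A ⊗[k] B)) j i) := by
  obtain ⟨Ψ, hΨ⟩ := exists_reedyMulMap_tmul_comp_eq_map e f Sp Sm Tp Tm j i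
  have h := map_injective_of_flat_flat _ _ he hf
  rw [← hΨ, LinearMap.coe_comp, LinearEquiv.coe_coe] at h
  exact (EquivLike.injective_comp Ψ _).1 h

theorem range_reedyMulMap_tmul {j i : ι × κ}
    (he : LinearMap.range (reedyMulMap k e (Sp : Set A) (Sm : Set A) j.1 i.1) =
      cornerSpace k (e j.1) (e i.1) Set.univ)
    (hf : LinearMap.range (reedyMulMap k f (Tp : Set B) (Tm : Set B) j.2 i.2) =
      cornerSpace k (f j.2) (f i.2) Set.univ) :
    LinearMap.range (reedyMulMap k (fun p : ι × κ => e p.1 ⊗ₜ[k] f p.2)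
        ((Algebra.TensorProduct.map Sp.val Tp.val).range : Set (A ⊗[k] B))
        ((Algebra.TensorProduct.map Sm.val Tm.val).range : Set (A ⊗[k] B)) j i) =
      cornerSpace k (e j.1 ⊗ₜ[k] f j.2) (e i.1 ⊗ₜ[k] f i.2) Set.univ := by
  obtain ⟨Ψ, hΨ⟩ := exists_reedyMulMap_tmul_comp_eq_map e f Sp Sm Tp Tm j i
  rw [← LinearMap.range_comp_of_range_eq_top _ Ψ.range, hΨ, TensorProduct.range_map, he, hf,
    cornerSpace_tmul _ _ _ _ span_univ_tensorProduct, range_mapIncl]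

end Reedy

theorem reedy_tensor_product_general
    (k : Type*) [Field k] (A B : Type*) [Ring A] [Algebra k A] [Ring B] [Algebra k B]
    {ι κ : Type*} [Fintype ι] [DecidableEq ι] [Fintype κ] [DecidableEq κ]
    (e : ι → A) (degA : ι → ℕ) (Ap Am : Subalgebra k A)
    (f : κ → B) (degB : κ → ℕ) (Bp Bm : Subalgebra k B)
    (hA : IsReedy k e degA Ap Am) (hB : IsReedy k f degB Bp Bm) :
    IsReedy k (fun p : ι × κ => (e p.1) ⊗ₜ[k] (f p.2))
      (fun p : ι × κ => degA p.1 + degB p.2)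
      (Algebra.TensorProduct.map Ap.val Bp.val).range
      (Algebra.TensorProduct.map Am.val Bm.val).range :=
  have hE := hA.completeOrthogonalIdempotents_s8.tmul (R := k) hB.completeOrthogonalIdempotents_s8
  { idem := hE.idem
    orth p q := @hE.ortho p q
    complete := hE.complete
    memP p := ⟨(⟨e p.1, hA.memP p.1⟩ : Ap) ⊗ₜ[k] (⟨f p.2, hB.memP p.2⟩ : Bp), rfl⟩
    memM p := ⟨(⟨e p.1, hA.memM p.1⟩ : Am) ⊗ₜ[k] (⟨f p.2, hB.memM p.2⟩ : Bm), rfl⟩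
    diagP p := by rw [cornerSpace_tmul_range_map, finrank_range_mapIncl, hA.diagP, hB.diagP]
    diagM p := by rw [cornerSpace_tmul_range_map, finrank_range_mapIncl, hA.diagM, hB.diagM]
    offP p q hpq h :=
      have hne := ne_bot_and_ne_bot_of_cornerSpace_tmul_range_map_ne_bot h
      Prod.add_lt_add_of_ne hpq (hA.offP _ _ · hne.1) (hB.offP _ _ · hne.2)
    offM p q hpq h :=
      have hne := ne_bot_and_ne_bot_of_cornerSpace_tmul_range_map_ne_bot h
      Prod.add_lt_add_of_ne hpq.symm (hA.offM _ _ ·.symm hne.1) (hB.offM _ _ ·.symm hne.2)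
    mul_inj i j := reedyMulMap_tmul_injective (hA.mul_inj i.1 j.1) (hB.mul_inj i.2 j.2)
    mul_range i j := range_reedyMulMap_tmul (hA.mul_range i.1 j.1) (hB.mul_range i.2 j.2) }

/-- The tensor product of two Reedy algebras is Reedy, with subalgebras
`A⁺ ⊗ₖ B⁺` and `A⁻ ⊗ₖ B⁻`, idempotents `eᵢ ⊗ fⱼ`, and degrees `deg(eᵢ ⊗ fⱼ) =
deg(eᵢ) + deg(fⱼ)`. -/
theorem reedy_tensor_product
    (k : Type*) [Field k] (A B : Type*) [Ring A] [Algebra k A] [Ring B] [Algebra k B]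
    [FiniteDimensional k A] [FiniteDimensional k B]
    {ι κ : Type*} [Fintype ι] [DecidableEq ι] [Fintype κ] [DecidableEq κ]
    (e : ι → A) (degA : ι → ℕ) (Ap Am : Subalgebra k A)
    (f : κ → B) (degB : κ → ℕ) (Bp Bm : Subalgebra k B)
    (hA : IsReedy k e degA Ap Am) (hB : IsReedy k f degB Bp Bm) :
    IsReedy k (fun p : ι × κ => (e p.1) ⊗ₜ[k] (f p.2))
      (fun p : ι × κ => degA p.1 + degB p.2)
      (Algebra.TensorProduct.map Ap.val Bp.val).range
      (Algebra.TensorProduct.map Am.val Bm.val).range :=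
  reedy_tensor_product_general k A B e degA Ap Am f degB Bp Bm hA hB
end

section
/- Let (A, A⁺, A⁻) be a Reedy algebra and e = ε₀ + ε₁ + ⋯ + εₗ the sum of all idempotents of degree at most l. Then (eAe, eA⁺e, eA⁻e) is a Reedy algebra, with degree function the restriction of that of A to the idempotents of degree at most l. -/
open scoped TensorProduct DirectSum

/-- The corner `eBe` of a subalgebra `B` of `A` (with `e ∈ B`), as a subalgebra of the
corner ring `eAe`. -/
def cornerSubalgOf (k : Type*) [Field k] {A : Type*} [Ring A] [Algebra k A]
    (e : {x : A // IsIdempotentElem x}) (B : Subalgebra k A) (he : (e : A) ∈ B) :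
    Subalgebra k (CornerRing k e) where
  carrier := {x | x.1 ∈ B}
  mul_mem' := fun hx hy => B.mul_mem hx hy
  add_mem' := fun hx hy => B.add_mem hx hy
  one_mem' := he
  zero_mem' := B.zero_mem
  algebraMap_mem' := fun c => by
    have h1 : (algebraMap k (CornerRing k e) c) = c • (1 : CornerRing k e) :=
      Algebra.algebraMap_eq_smul_one c
    show (algebraMap k (CornerRing k e) c).1 ∈ B
    rw [h1]
    exact B.smul_mem he c

/-! The corner `εAε` embeds into `A`, and for indices `i, j` of degree at most `l` this
embedding identifies the corners `e_j (εSε) e_i` with `e_j S e_i`, because `ε e_i = e_i`.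
The multiplication map of the corner is then the restriction of that of `A` to the summands
of degree at most `l`; the remaining summands vanish, since `e_j A⁺ e_t = 0` whenever
`deg j < deg t`. Hence injectivity and the image of the multiplication map carry over. -/

lemma OrthogonalIdempotents.sum_mul_of_mem {R I : Type*} [Semiring R] {e : I → R}
    (he : OrthogonalIdempotents e) {i : I} {s : Finset I} (h : i ∈ s) :
    (∑ j ∈ s, e j) * e i = e i := by
  classical
  simp [Finset.sum_mul, he.mul_eq, h]

lemma OrthogonalIdempotents.mem_cornerNonUnitalSubalgebra_sum (k : Type*) [Field k]
    {A I : Type*} [Ring A] [Algebra k A] {e : I → A} (he : OrthogonalIdempotents e)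
    {i : I} {s : Finset I} (h : i ∈ s) :
    e i ∈ cornerNonUnitalSubalgebra k (∑ j ∈ s, e j) :=
  ⟨he.sum_mul_of_mem h, he.mul_sum_of_mem h⟩

namespace DirectSum

variable {R : Type*} [Semiring R] {ι : Type*} [DecidableEq ι] {p : ι → Prop}
  [DecidablePred p] {M : {i // p i} → Type*} {N : ι → Type*}
  [∀ s, AddCommMonoid (M s)] [∀ s, Module R (M s)]
  [∀ i, AddCommMonoid (N i)] [∀ i, Module R (N i)]

noncomputable def extendSubtype (φ : ∀ s, M s ≃ₗ[R] N s) :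
    (⨁ s, M s) →ₗ[R] ⨁ i, N i :=
  toModule R _ _ fun s => (lof R ι N s).comp (φ s).toLinearMap

noncomputable def restrictSubtype (φ : ∀ s, M s ≃ₗ[R] N s) :
    (⨁ i, N i) →ₗ[R] ⨁ s, M s :=
  toModule R _ _ fun i =>
    if h : p i then (lof R _ M ⟨i, h⟩).comp (φ ⟨i, h⟩).symm.toLinearMap else 0

lemma restrictSubtype_comp_extendSubtype (φ : ∀ s, M s ≃ₗ[R] N s) :
    restrictSubtype φ ∘ₗ extendSubtype φ = LinearMap.id := by
  refine linearMap_ext R fun s => LinearMap.ext fun x => ?_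
  simp [extendSubtype, restrictSubtype, s.2]

lemma extendSubtype_injective (φ : ∀ s, M s ≃ₗ[R] N s) :
    Function.Injective (extendSubtype φ) :=
  Function.LeftInverse.injective (g := restrictSubtype φ) fun x =>
    LinearMap.congr_fun (restrictSubtype_comp_extendSubtype φ) x

lemma range_comp_extendSubtype {P : Type*} [AddCommMonoid P] [Module R P]
    (φ : ∀ s, M s ≃ₗ[R] N s) (f : (⨁ i, N i) →ₗ[R] P)
    (hf : ∀ i, ¬ p i → Subsingleton (N i)) :
    LinearMap.range (f ∘ₗ extendSubtype φ) = LinearMap.range f := by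
  refine le_antisymm (LinearMap.range_comp_le_range _ _) ?_
  have hfactor : f ∘ₗ extendSubtype φ ∘ₗ restrictSubtype φ = f := by
    refine linearMap_ext R fun i => LinearMap.ext fun x => ?_
    by_cases hi : p i
    · simp [extendSubtype, restrictSubtype, hi]
    · have := hf i hi
      simp [Subsingleton.elim x 0]
  rintro - ⟨x, rfl⟩
  exact ⟨restrictSubtype φ x, LinearMap.congr_fun hfactor x⟩

end DirectSum

namespace CornerRing

variable (k : Type*) [Field k] {A : Type*} [Ring A] [Algebra k A]
  (ε : {x : A // IsIdempotentElem x})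

def subtype : CornerRing k ε →ₗ[k] A where
  toFun := Subtype.val
  map_add' _ _ := rfl
  map_smul' _ _ := rfl

@[simp] lemma subtype_apply (x : CornerRing k ε) : subtype k ε x = x.1 := rfl

lemma subtype_injective : Function.Injective (subtype k ε) := Subtype.val_injective

variable {k ε}

lemma mul_mul_mem_cornerNonUnitalSubalgebra (b : A) :
    ε.1 * b * ε.1 ∈ cornerNonUnitalSubalgebra k ε.1 :=
  ⟨by rw [← mul_assoc, ← mul_assoc, ε.2.eq], by rw [mul_assoc, ε.2.eq]⟩

lemma map_subtype_cornerSpace (f g : CornerRing k ε) {SC : Set (CornerRing k ε)} {SA : Set A}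
    (hCA : ∀ x ∈ SC, x.1 ∈ SA) (hAC : ∀ b ∈ SA, ∃ c ∈ SC, c.1 = ε.1 * b * ε.1) :
    (cornerSpace k f g SC).map (subtype k ε) = cornerSpace k f.1 g.1 SA := by
  rw [cornerSpace, cornerSpace, Submodule.map_span]
  congr 1
  ext y
  constructor
  · rintro ⟨-, ⟨a, ha, rfl⟩, rfl⟩
    exact ⟨a.1, hCA a ha, rfl⟩
  · rintro ⟨b, hb, rfl⟩
    obtain ⟨c, hc, hcb⟩ := hAC b hb
    refine ⟨f * c * g, ⟨c, hc, rfl⟩, ?_⟩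
    -- `f = f ε` and `g = ε g` absorb the compression `ε b ε`.
    change f.1 * c.1 * g.1 = f.1 * b * g.1
    rw [hcb, ← mul_assoc, ← mul_assoc, f.2.2, mul_assoc, g.2.1]

lemma map_subtype_cornerSpace_cornerSubalgOf (f g : CornerRing k ε) (B : Subalgebra k A)
    (hB : ε.1 ∈ B) :
    (cornerSpace k f g (cornerSubalgOf k ε B hB : Set (CornerRing k ε))).map (subtype k ε) =
      cornerSpace k f.1 g.1 (B : Set A) :=
  map_subtype_cornerSpace f g (fun _ hx => hx) fun b hb =>
    ⟨⟨_, mul_mul_mem_cornerNonUnitalSubalgebra b⟩, B.mul_mem (B.mul_mem hB hb) hB, rfl⟩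

lemma map_subtype_cornerSpace_univ (f g : CornerRing k ε) :
    (cornerSpace k f g Set.univ).map (subtype k ε) = cornerSpace k f.1 g.1 Set.univ :=
  map_subtype_cornerSpace f g (fun _ _ => trivial) fun b _ =>
    ⟨⟨_, mul_mul_mem_cornerNonUnitalSubalgebra b⟩, trivial, rfl⟩

end CornerRing

section CornerFamily

variable {k : Type*} [Field k] {A : Type*} [Ring A] [Algebra k A]
  {ε : {x : A // IsIdempotentElem x}} {ι : Type*} {e : ι → A} {p : ι → Prop}

def cornerFamily (he : ∀ i, p i → e i ∈ cornerNonUnitalSubalgebra k ε.1) :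
    {i // p i} → CornerRing k ε :=
  fun i => ⟨e i, he i i.2⟩

variable (he : ∀ i, p i → e i ∈ cornerNonUnitalSubalgebra k ε.1)
  (B : Subalgebra k A) (hB : ε.1 ∈ B)

noncomputable def cornerSpaceEquiv (a b : {i // p i}) :
    cornerSpace k (cornerFamily he a) (cornerFamily he b)
        (cornerSubalgOf k ε B hB : Set (CornerRing k ε)) ≃ₗ[k]
      cornerSpace k (e a) (e b) (B : Set A) :=
  (Submodule.equivMapOfInjective _ (CornerRing.subtype_injective k ε) _).trans
    (LinearEquiv.ofEq _ _ (CornerRing.map_subtype_cornerSpace_cornerSubalgOf _ _ B hB))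

lemma finrank_cornerSpace_cornerFamily (a b : {i // p i}) :
    Module.finrank k (cornerSpace k (cornerFamily he a) (cornerFamily he b)
        (cornerSubalgOf k ε B hB : Set (CornerRing k ε))) =
      Module.finrank k (cornerSpace k (e a) (e b) (B : Set A)) :=
  (cornerSpaceEquiv he B hB a b).finrank_eq

lemma cornerSpace_cornerFamily_eq_bot_iff (a b : {i // p i}) :
    cornerSpace k (cornerFamily he a) (cornerFamily he b)
        (cornerSubalgOf k ε B hB : Set (CornerRing k ε)) = ⊥ ↔
      cornerSpace k (e a) (e b) (B : Set A) = ⊥ := by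
  rw [← (Submodule.map_injective_of_injective (CornerRing.subtype_injective k ε)).eq_iff,
    Submodule.map_bot, CornerRing.map_subtype_cornerSpace_cornerSubalgOf]
  rfl

variable [Fintype ι] [DecidableEq ι] [DecidablePred p] (C : Subalgebra k A) (hC : ε.1 ∈ C)

lemma subtype_comp_reedyMulMap_cornerFamily (j i : {i // p i}) :
    CornerRing.subtype k ε ∘ₗ reedyMulMap k (cornerFamily he)
        (cornerSubalgOf k ε B hB : Set (CornerRing k ε))
        (cornerSubalgOf k ε C hC : Set (CornerRing k ε)) j i =
      reedyMulMap k e B C j i ∘ₗ DirectSum.extendSubtype (R := k) fun s =>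
        TensorProduct.congr (cornerSpaceEquiv he B hB j s) (cornerSpaceEquiv he C hC s i) := by
  refine DirectSum.linearMap_ext k fun s => TensorProduct.ext' fun x y => ?_
  simp only [reedyMulMap, mulTensor, DirectSum.extendSubtype, cornerSpaceEquiv,
    LinearMap.coe_comp, Function.comp_apply, DirectSum.toModule_lof, TensorProduct.lift.tmul,
    TensorProduct.toLinearMap_congr, TensorProduct.map_tmul, LinearEquiv.coe_coe,
    LinearEquiv.trans_apply, LinearMap.domRestrict₁₂_apply, LinearMap.mul_apply',
    CornerRing.subtype_apply]
  rfl

lemma injective_reedyMulMap_cornerFamily (j i : {i // p i})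
    (hinj : Function.Injective (reedyMulMap k e B C j i)) :
    Function.Injective (reedyMulMap k (cornerFamily he)
      (cornerSubalgOf k ε B hB : Set (CornerRing k ε))
      (cornerSubalgOf k ε C hC : Set (CornerRing k ε)) j i) := by
  rw [← (CornerRing.subtype_injective k ε).of_comp_iff, ← LinearMap.coe_comp,
    subtype_comp_reedyMulMap_cornerFamily, LinearMap.coe_comp]
  exact hinj.comp (DirectSum.extendSubtype_injective _)

lemma range_reedyMulMap_cornerFamily (j i : {i // p i})
    (hvanish : ∀ t, ¬ p t → cornerSpace k (e j) (e t) (B : Set A) = ⊥)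
    (hrange : LinearMap.range (reedyMulMap k e B C j i) = cornerSpace k (e j) (e i) Set.univ) :
    LinearMap.range (reedyMulMap k (cornerFamily he)
        (cornerSubalgOf k ε B hB : Set (CornerRing k ε))
        (cornerSubalgOf k ε C hC : Set (CornerRing k ε)) j i) =
      cornerSpace k (cornerFamily he j) (cornerFamily he i) Set.univ := by
  have hsubsingleton : ∀ t, ¬ p t → Subsingleton
      (cornerSpace k (e j) (e t) (B : Set A) ⊗[k] cornerSpace k (e t) (e i) (C : Set A)) := by
    intro t ht
    have : Subsingleton (cornerSpace k (e j) (e t) (B : Set A)) := by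
      rw [hvanish t ht]; infer_instance
    infer_instance
  apply Submodule.map_injective_of_injective (CornerRing.subtype_injective k ε)
  rw [CornerRing.map_subtype_cornerSpace_univ, ← LinearMap.range_comp,
    subtype_comp_reedyMulMap_cornerFamily, DirectSum.range_comp_extendSubtype _ _ hsubsingleton,
    hrange]
  rfl

end CornerFamily

section Reedy

variable {k : Type*} [Field k] {A : Type*} [Ring A] [Algebra k A] {ι : Type*} [Fintype ι]
  [DecidableEq ι] {e : ι → A} {deg : ι → ℕ} {Ap Am : Subalgebra k A}

lemma IsReedy.orthogonalIdempotents (h : IsReedy k e deg Ap Am) : OrthogonalIdempotents e :=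
  ⟨h.idem, fun _ _ => h.orth _ _⟩

lemma IsReedy.cornerSpace_Ap_eq_bot_of_deg_lt (h : IsReedy k e deg Ap Am) {j t : ι}
    (hlt : deg j < deg t) : cornerSpace k (e j) (e t) (Ap : Set A) = ⊥ := by
  by_contra hne
  exact lt_asymm hlt (h.offP t j (fun htj => hlt.ne (congrArg deg htj.symm)) hne)

end Reedy

theorem reedy_corner_is_reedy_general
    (k : Type*) [Field k] (A : Type*) [Ring A] [Algebra k A]
    {ι : Type*} [Fintype ι] [DecidableEq ι]
    (e : ι → A) (deg : ι → ℕ) (Ap Am : Subalgebra k A)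
    (h : IsReedy k e deg Ap Am) (l : ℕ)
    (ε : A) (hεdef : ε = ∑ i : {i : ι // deg i ≤ l}, e i.1)
    (hε : IsIdempotentElem ε) (hP : ε ∈ Ap) (hM : ε ∈ Am) :
    ∃ e' : {i : ι // deg i ≤ l} → CornerRing k ⟨ε, hε⟩,
      (∀ i, (e' i).1 = e i.1) ∧
      IsReedy k e' (fun i => deg i.1)
        (cornerSubalgOf k ⟨ε, hε⟩ Ap hP) (cornerSubalgOf k ⟨ε, hε⟩ Am hM) := by
  have he : ∀ i, deg i ≤ l → e i ∈ cornerNonUnitalSubalgebra k ε := fun i hi => by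
    have hsub := h.orthogonalIdempotents.embedding (Function.Embedding.subtype (deg · ≤ l))
    subst hεdef
    exact hsub.mem_cornerNonUnitalSubalgebra_sum k (Finset.mem_univ ⟨i, hi⟩)
  refine ⟨cornerFamily (ε := ⟨ε, hε⟩) he, fun _ => rfl, ?_⟩
  exact
    { idem := fun i => Subtype.ext (h.idem i)
      orth := fun i j hij => Subtype.ext (h.orth i j (Subtype.coe_ne_coe.mpr hij))
      complete := CornerRing.subtype_injective k _ (by rw [map_sum]; exact hεdef.symm)
      memP := fun i => h.memP i
      memM := fun i => h.memM i
      diagP := fun i => (finrank_cornerSpace_cornerFamily he Ap hP i i).trans (h.diagP i)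
      offP := fun i j hij hne => h.offP i j (Subtype.coe_ne_coe.mpr hij)
        ((cornerSpace_cornerFamily_eq_bot_iff he Ap hP j i).not.mp hne)
      diagM := fun i => (finrank_cornerSpace_cornerFamily he Am hM i i).trans (h.diagM i)
      offM := fun i j hij hne => h.offM i j (Subtype.coe_ne_coe.mpr hij)
        ((cornerSpace_cornerFamily_eq_bot_iff he Am hM j i).not.mp hne)
      mul_inj := fun i j => injective_reedyMulMap_cornerFamily he Ap hP Am hM j i (h.mul_inj i j)
      mul_range := fun i j => range_reedyMulMap_cornerFamily he Ap hP Am hM j i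
        (fun _ ht => h.cornerSpace_Ap_eq_bot_of_deg_lt (j.2.trans_lt (not_le.mp ht)))
        (h.mul_range i j) }

/-- If `(A, A⁺, A⁻)` is Reedy and `e = ε₀ + ⋯ + εₗ` is the sum of all
idempotents of degree at most `l`, then `(eAe, eA⁺e, eA⁻e)` is a Reedy algebra with the
restricted idempotents and degree function. -/
theorem reedy_corner_is_reedy
    (k : Type*) [Field k] (A : Type*) [Ring A] [Algebra k A] [FiniteDimensional k A]
    {ι : Type*} [Fintype ι] [DecidableEq ι]
    (e : ι → A) (deg : ι → ℕ) (Ap Am : Subalgebra k A)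
    (h : IsReedy k e deg Ap Am) (l : ℕ)
    (ε : A) (hεdef : ε = ∑ i : {i : ι // deg i ≤ l}, e i.1)
    (hε : IsIdempotentElem ε) (hP : ε ∈ Ap) (hM : ε ∈ Am) :
    ∃ e' : {i : ι // deg i ≤ l} → CornerRing k ⟨ε, hε⟩,
      (∀ i, (e' i).1 = e i.1) ∧
      IsReedy k e' (fun i => deg i.1)
        (cornerSubalgOf k ⟨ε, hε⟩ Ap hP) (cornerSubalgOf k ⟨ε, hε⟩ Am hM) :=
  reedy_corner_is_reedy_general k A e deg Ap Am h l ε hεdef hε hP hM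
end
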